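/- arXiv:2305.02951 — 9 statements merged into one kernel-verified Lean document; each statement's English description precedes it below -/
import Mathlib

section
/- Let X be an injective metric space. Then X is a geodesic metric space: for all x, y ∈ X there exists an isometric embedding γ : [0, dist(x,y)] → X with γ(0) = x and γ(dist(x,y)) = y (i.e., dist(γ(s), γ(t)) = |s − t| for all s, t ∈ [0, dist(x,y)]). -/
universe u v w

/-- A metric space `X` is injective if for all metric spaces `Y` and `Z`, every isometric
embedding `i : Y → Z`, and every 1-Lipschitz map `f : Y → X`, there exists a 1-Lipschitz
map `g : Z → X` with `g ∘ i = f`. -/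
def IsInjMetric (X : Type w) [MetricSpace X] : Prop :=
  ∀ (Y : Type u) (Z : Type v) [MetricSpace Y] [MetricSpace Z]
    (i : Y → Z) (f : Y → X), Isometry i → LipschitzWith 1 f →
      ∃ g : Z → X, LipschitzWith 1 g ∧ ∀ y, g (i y) = f y

/-!
Extend the isometry `0 ↦ x`, `dist x y ↦ y` from the two-point subset `{0, dist x y}` of `ℝ`
to a 1-Lipschitz map `γ : ℝ → X`. A 1-Lipschitz path whose endpoints are as far apart as the
parameters is an isometry on the whole parameter interval: if some subsegment were shortened,
the triangle inequality would make the endpoints closer than they are.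
-/

open Set

theorem LipschitzOnWith.dist_eq_abs_sub_of_dist_endpoints {X : Type*} [PseudoMetricSpace X]
    {γ : ℝ → X} {a b : ℝ} (hγ : LipschitzOnWith 1 γ (Icc a b))
    (hab : dist (γ a) (γ b) = b - a) {s t : ℝ} (hs : s ∈ Icc a b) (ht : t ∈ Icc a b) :
    dist (γ s) (γ t) = |s - t| := by
  have hle : ∀ u ∈ Icc a b, ∀ v ∈ Icc a b, dist (γ u) (γ v) ≤ |u - v| := fun u hu v hv => by
    simpa [Real.dist_eq] using hγ.dist_le_mul u hu v hv
  wlog hst : s ≤ t generalizing s t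
  · rw [dist_comm, abs_sub_comm]
    exact this ht hs (le_of_not_ge hst)
  have hab' : a ≤ b := hs.1.trans hs.2
  have hsa := hle a (left_mem_Icc.2 hab') s hs
  have htb := hle t ht b (right_mem_Icc.2 hab')
  rw [abs_of_nonpos (by linarith [hs.1]), neg_sub] at hsa
  rw [abs_of_nonpos (by linarith [ht.2]), neg_sub] at htb
  have hst' := hle s hs t ht
  rw [abs_of_nonpos (sub_nonpos.2 hst), neg_sub] at hst' ⊢
  linarith [dist_triangle4 (γ a) (γ s) (γ t) (γ b)]

section PairMap

variable {X : Type*}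

noncomputable def pairMap (x y : X) (s : ℝ) : X := if s = 0 then x else y

@[simp]
theorem pairMap_zero (x y : X) : pairMap x y 0 = x := if_pos rfl

variable [MetricSpace X]

@[simp]
theorem pairMap_dist (x y : X) : pairMap x y (dist x y) = y := by
  by_cases hxy : x = y
  · simp [hxy]
  · exact if_neg (dist_ne_zero.2 hxy)

theorem dist_pairMap {x y : X} {s t : ℝ} (hs : s ∈ ({0, dist x y} : Set ℝ))
    (ht : t ∈ ({0, dist x y} : Set ℝ)) : dist (pairMap x y s) (pairMap x y t) = |s - t| := by
  rcases hs with rfl | rfl <;> rcases ht with rfl | rfl <;> simp [dist_comm]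

end PairMap

/-- An injective metric space is geodesic: any two points `x, y` are joined by an isometric
embedding `γ : [0, dist x y] → X` with `γ 0 = x` and `γ (dist x y) = y`. -/
theorem injective_metric_space_is_geodesic (X : Type w) [MetricSpace X]
    (hX : IsInjMetric.{u, v} X) (x y : X) :
    ∃ γ : ℝ → X, γ 0 = x ∧ γ (dist x y) = y ∧
      ∀ s ∈ Set.Icc (0 : ℝ) (dist x y), ∀ t ∈ Set.Icc (0 : ℝ) (dist x y),
        dist (γ s) (γ t) = |s - t| := by
  let P : Set ℝ := {0, dist x y}
  have hup : Isometry (ULift.up.{v} : ℝ → ULift ℝ) := Isometry.of_dist_eq fun _ _ => rfl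
  have hi : Isometry fun p : ULift.{u} P => ULift.up.{v} (p.down : ℝ) :=
    Isometry.of_dist_eq fun _ _ => rfl
  have hf : Isometry fun p : ULift.{u} P => pairMap x y p.down :=
    Isometry.of_dist_eq fun p q => (dist_pairMap p.down.2 q.down.2).trans (Real.dist_eq _ _).symm
  obtain ⟨g, hg, hgi⟩ := hX _ _ _ _ hi hf.lipschitz
  have hγ0 : g (ULift.up 0) = x := (hgi ⟨⟨0, Or.inl rfl⟩⟩).trans (pairMap_zero x y)
  have hγd : g (ULift.up (dist x y)) = y := (hgi ⟨⟨dist x y, Or.inr rfl⟩⟩).trans (pairMap_dist x y)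
  refine ⟨g ∘ ULift.up, hγ0, hγd, fun s hs t ht => ?_⟩
  refine LipschitzOnWith.dist_eq_abs_sub_of_dist_endpoints ?_ ?_ hs ht
  · simpa using (hg.comp hup.lipschitz).lipschitzOnWith
  · simp [hγ0, hγd]
end

section
/- Let X be an injective metric space, let n ≥ 1, and let x_1, …, x_n ∈ X. Then there exists a point c ∈ X (a center of x_1, …, x_n) such that for every i, dist(c, x_i) ≤ (1/n) · Σ_{j=1}^{n} dist(x_i, x_j). -/
/-! The radii `r i = (1/n) ∑ j, dist (x i) (x j)` satisfy `dist (x i) (x j) ≤ r i + r j`: average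
the triangle inequality through every `x k`. Closed balls with this property meet in an injective
space. Shrink the radii until they are also 1-Lipschitz along `x`; then the vector `r` of the
sup-normed `ℝⁿ` lies within `r i` of the distance profile `(dist (x i) (x j))_j` of each `x i`.
The profiles embed the points `x i` isometrically, so a 1-Lipschitz extension of the inverse of
this embedding sends `r` to a common point of the balls. -/

universe u v w

open Finset

section

variable {X : Type*} [PseudoMetricSpace X] {ι : Type*} [Fintype ι]

theorem dist_pi_dist_eq (x : ι → X) (p : X) (i : ι) :
    dist (fun j => dist p (x j)) (fun j => dist (x i) (x j)) = dist p (x i) := by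
  refine le_antisymm ((dist_pi_le_iff dist_nonneg).2 fun j => abs_dist_sub_le _ _ _) ?_
  simpa using dist_le_pi_dist (fun j => dist p (x j)) (fun j => dist (x i) (x j)) i

/-- The witness is `ρ i = min_k (r k + dist (x k) (x i))`. -/
theorem exists_lipschitz_radii_le (x : ι → X) (r : ι → ℝ)
    (hr : ∀ i j, dist (x i) (x j) ≤ r i + r j) :
    ∃ ρ : ι → ℝ, (∀ i, ρ i ≤ r i) ∧ (∀ i j, dist (x i) (x j) ≤ ρ i + ρ j) ∧
      ∀ i j, ρ i ≤ ρ j + dist (x i) (x j) := by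
  let ρ i := univ.inf' ⟨i, mem_univ i⟩ fun k => r k + dist (x k) (x i)
  have ρ_le i k : ρ i ≤ r k + dist (x k) (x i) := inf'_le _ (mem_univ k)
  have ρ_eq i : ∃ k, ρ i = r k + dist (x k) (x i) := by
    obtain ⟨k, -, hk⟩ := exists_mem_eq_inf' ⟨i, mem_univ i⟩ fun k => r k + dist (x k) (x i)
    exact ⟨k, hk⟩
  refine ⟨ρ, fun i => by simpa using ρ_le i i, fun i j => ?_, fun i j => ?_⟩
  · obtain ⟨k, hk⟩ := ρ_eq i
    obtain ⟨l, hl⟩ := ρ_eq j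
    calc dist (x i) (x j) ≤ dist (x i) (x k) + dist (x k) (x l) + dist (x l) (x j) :=
          dist_triangle4 _ _ _ _
      _ ≤ dist (x k) (x i) + (r k + r l) + dist (x l) (x j) := by
          rw [dist_comm (x i)]; gcongr; exact hr k l
      _ = ρ i + ρ j := by rw [hk, hl]; ring
  · obtain ⟨k, hk⟩ := ρ_eq j
    calc ρ i ≤ r k + dist (x k) (x i) := ρ_le i k
      _ ≤ r k + (dist (x k) (x j) + dist (x i) (x j)) := by gcongr; exact dist_triangle_right _ _ _
      _ = ρ j + dist (x i) (x j) := by rw [hk]; ring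

theorem dist_le_mean_dist_add_mean_dist (x : ι → X) (i j : ι) :
    dist (x i) (x j) ≤ 1 / (Fintype.card ι : ℝ) * ∑ k, dist (x i) (x k) +
      1 / (Fintype.card ι : ℝ) * ∑ k, dist (x j) (x k) := by
  have hcard : (0 : ℝ) < Fintype.card ι := Nat.cast_pos.2 (Fintype.card_pos_iff.2 ⟨i⟩)
  rw [← mul_add, ← sum_add_distrib, one_div_mul_eq_div, le_div_iff₀ hcard]
  calc dist (x i) (x j) * Fintype.card ι = ∑ _k : ι, dist (x i) (x j) := by simp [mul_comm]
    _ ≤ ∑ k, (dist (x i) (x k) + dist (x j) (x k)) :=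
        sum_le_sum fun k _ => dist_triangle_right _ _ _

end

namespace IsInjMetric

variable {X : Type w} [MetricSpace X]

theorem exists_forall_dist_le_of_lipschitz (hX : IsInjMetric.{u, v} X) {ι : Type} [Fintype ι]
    (x : ι → X) (r : ι → ℝ) (hr : ∀ i j, dist (x i) (x j) ≤ r i + r j)
    (hlip : ∀ i j, r i ≤ r j + dist (x i) (x j)) :
    ∃ c : X, ∀ i, dist c (x i) ≤ r i := by
  -- `Set.range x` lives in the universe of `X`; its copy `Quotient (Setoid.ker x)` lives in `Type`
  -- and so can be lifted to the universe `u` demanded by `IsInjMetric`.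
  let _ : MetricSpace (Quotient (Setoid.ker x)) :=
    MetricSpace.induced _ (Setoid.kerLift_injective x) inferInstance
  let e : ULift.{u} (Quotient (Setoid.ker x)) → ULift.{v} (ι → ℝ) :=
    fun a => ⟨fun j => dist (Setoid.kerLift x a.down) (x j)⟩
  have he : Isometry e := by
    refine Isometry.of_dist_eq fun a ⟨b⟩ => ?_
    induction b using Quotient.inductionOn with
    | h i => exact dist_pi_dist_eq x _ i
  have hf : Isometry fun a : ULift.{u} (Quotient (Setoid.ker x)) => Setoid.kerLift x a.down :=
    fun _ _ => rfl
  obtain ⟨g, hg, hge⟩ := hX _ _ e _ he hf.lipschitz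
  refine ⟨g ⟨r⟩, fun i => ?_⟩
  have hri : 0 ≤ r i := by linarith [hr i i, dist_self (x i)]
  calc dist (g ⟨r⟩) (x i) = dist (g ⟨r⟩) (g (e ⟨⟦i⟧⟩)) := by rw [hge]; rfl
    _ ≤ dist (⟨r⟩ : ULift.{v} (ι → ℝ)) (e ⟨⟦i⟧⟩) := by simpa using hg.dist_le_mul _ _
    _ = dist r fun j => dist (x i) (x j) := rfl
    _ ≤ r i := (dist_pi_le_iff hri).2 fun j => abs_sub_le_iff.2
        ⟨by linarith [hlip j i, dist_comm (x i) (x j)], by linarith [hr i j]⟩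

theorem exists_forall_dist_le (hX : IsInjMetric.{u, v} X) {ι : Type} [Fintype ι]
    (x : ι → X) (r : ι → ℝ) (hr : ∀ i j, dist (x i) (x j) ≤ r i + r j) :
    ∃ c : X, ∀ i, dist c (x i) ≤ r i := by
  obtain ⟨ρ, hρr, hρ, hρlip⟩ := exists_lipschitz_radii_le x r hr
  obtain ⟨c, hc⟩ := hX.exists_forall_dist_le_of_lipschitz x ρ hρ hρlip
  exact ⟨c, fun i => (hc i).trans (hρr i)⟩

end IsInjMetric

theorem injective_center_general (X : Type w) [MetricSpace X]
    (hX : IsInjMetric.{u, v} X) (n : ℕ) (x : Fin n → X) :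
    ∃ c : X, ∀ i : Fin n, dist c (x i) ≤ (1 / (n : ℝ)) * ∑ j : Fin n, dist (x i) (x j) := by
  simpa using hX.exists_forall_dist_le x _ (dist_le_mean_dist_add_mean_dist x)

/-- In an injective metric space, every finite family of points `x 1, …, x n` (with `n ≥ 1`)
admits a center `c` with `dist c (x i) ≤ (1/n) * ∑ j, dist (x i) (x j)` for every `i`. -/
theorem injective_center (X : Type w) [MetricSpace X]
    (hX : IsInjMetric.{u, v} X) (n : ℕ) (hn : 1 ≤ n) (x : Fin n → X) :
    ∃ c : X, ∀ i : Fin n, dist c (x i) ≤ (1 / (n : ℝ)) * ∑ j : Fin n, dist (x i) (x j) :=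
  injective_center_general X hX n x
end

section
/- Let X be an injective metric space and let x_1, y_1, x_2, y_2 ∈ X. Then there exist maps γ_1, γ_2 : [0,1] → X such that for j = 1, 2: γ_j(0) = x_j, γ_j(1) = y_j, and dist(γ_j(s), γ_j(t)) = |s − t| · dist(x_j, y_j) for all s, t ∈ [0,1] (each γ_j is a constant-speed geodesic), and moreover dist(γ_1(t), γ_2(t)) ≤ (1 − t) · dist(x_1, x_2) + t · dist(y_1, y_2) for all t ∈ [0,1]. In particular the two geodesics fellow-travel at distance max(dist(x_1,x_2), dist(y_1,y_2)). -/
/-!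
Send the four points into `ℓ^∞(Fin 4)` by the Fréchet map `x ↦ (dist x pᵢ)ᵢ`, which is
isometric on them. Injectivity extends its inverse to a 1-Lipschitz map `g : ℓ^∞(Fin 4) → X`,
and the geodesics are the images under `g` of the affine segments. A 1-Lipschitz image of a
segment whose endpoints keep their distance is again a constant-speed geodesic (triangle
inequality through the endpoints), and affine segments fellow-travel in any normed space.
-/

universe u v w

open AffineMap

section Frechet

-- `ι : Type` so that `ι → ℝ` can be lifted to the universes `u`, `v` of `IsInjMetric`.
variable {X : Type w} [MetricSpace X] {ι : Type} [Fintype ι]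

/-- Since `ι → ℝ` carries the sup metric, this is the Fréchet embedding into `ℓ^∞(ι)`. -/
def frechetMap (p : ι → X) (x : X) : ι → ℝ := fun i => dist x (p i)

theorem dist_frechetMap_le (p : ι → X) (x y : X) :
    dist (frechetMap p x) (frechetMap p y) ≤ dist x y :=
  (dist_pi_le_iff dist_nonneg).2 fun i => by
    simpa only [frechetMap, Real.dist_eq] using abs_dist_sub_le x y (p i)

theorem dist_frechetMap_apply (p : ι → X) (x : X) (i : ι) :
    dist (frechetMap p x) (frechetMap p (p i)) = dist x (p i) := by
  refine (dist_frechetMap_le p x (p i)).antisymm ?_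
  simpa [frechetMap, Real.dist_eq, abs_of_nonneg dist_nonneg] using
    dist_le_pi_dist (frechetMap p x) (frechetMap p (p i)) i

theorem frechetMap_eq_frechetMap_apply_iff {p : ι → X} {x : X} {i : ι} :
    frechetMap p x = frechetMap p (p i) ↔ x = p i := by
  rw [← dist_eq_zero, dist_frechetMap_apply, dist_eq_zero]

theorem IsInjMetric.exists_lipschitzWith_leftInverse_frechetMap (hX : IsInjMetric.{u, v} X)
    (p : ι → X) :
    ∃ g : (ι → ℝ) → X, LipschitzWith 1 g ∧ ∀ i, g (frechetMap p (p i)) = p i := by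
  set q : Set.range (frechetMap p ∘ p) → X := p ∘ Set.rangeSplitting (frechetMap p ∘ p)
  have hq : ∀ z, frechetMap p (q z) = z := Set.apply_rangeSplitting (frechetMap p ∘ p)
  have hq_isometry : Isometry q := Isometry.of_dist_eq fun z z' => by
    rw [Subtype.dist_eq, ← hq z, ← hq z']
    exact (dist_frechetMap_apply p (q z) (Set.rangeSplitting _ z')).symm
  obtain ⟨g, hg, hgi⟩ :=
    hX (ULift.{u} (Set.range (frechetMap p ∘ p))) (ULift.{v} (ι → ℝ))
      (fun z => ULift.up z.down.1) (fun z => q z.down) (Isometry.of_dist_eq fun _ _ => rfl)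
      (hq_isometry.comp (f := ULift.down.{u}) (Isometry.of_dist_eq fun _ _ => rfl)).lipschitz
  refine ⟨g ∘ ULift.up,
    by simpa using hg.comp (Isometry.of_dist_eq (f := ULift.up.{v}) fun _ _ => rfl).lipschitz,
    fun i => (hgi (ULift.up ⟨_, i, rfl⟩)).trans (frechetMap_eq_frechetMap_apply_iff.1 (hq _))⟩

end Frechet

section Geodesic

variable {X : Type w} [MetricSpace X]

theorem dist_eq_abs_sub_mul_of_dist_le {γ : ℝ → X} {D : ℝ}
    (hγ : ∀ s ∈ Set.Icc (0 : ℝ) 1, ∀ t ∈ Set.Icc (0 : ℝ) 1,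
      dist (γ s) (γ t) ≤ |s - t| * D)
    (hends : dist (γ 0) (γ 1) = D) {s t : ℝ} (hs : s ∈ Set.Icc (0 : ℝ) 1)
    (ht : t ∈ Set.Icc (0 : ℝ) 1) :
    dist (γ s) (γ t) = |s - t| * D := by
  wlog hst : s ≤ t generalizing s t
  · rw [dist_comm, abs_sub_comm]
    exact this ht hs (le_of_not_ge hst)
  refine (hγ s hs t ht).antisymm ?_
  have h0 := hγ 0 ⟨le_rfl, zero_le_one⟩ s hs
  have h1 := hγ t ht 1 ⟨zero_le_one, le_rfl⟩
  rw [abs_of_nonpos (by linarith [hs.1])] at h0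
  rw [abs_of_nonpos (by linarith [ht.2])] at h1
  rw [abs_of_nonpos (by linarith)]
  linarith [dist_triangle4 (γ 0) (γ s) (γ t) (γ 1)]

variable {E : Type*} [NormedAddCommGroup E] [NormedSpace ℝ E]

theorem dist_comp_lineMap_of_lipschitzWith {g : E → X} (hg : LipschitzWith 1 g) {a b : E}
    (hab : dist (g a) (g b) = dist a b) {s t : ℝ} (hs : s ∈ Set.Icc (0 : ℝ) 1)
    (ht : t ∈ Set.Icc (0 : ℝ) 1) :
    dist (g (lineMap a b s)) (g (lineMap a b t)) = |s - t| * dist a b := by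
  refine dist_eq_abs_sub_mul_of_dist_le (γ := fun t => g (lineMap a b t))
    (fun s _ t _ => ?_) (by simpa using hab) hs ht
  simpa [← Real.dist_eq] using hg.dist_le_mul (lineMap a b s) (lineMap a b t)

theorem dist_lineMap_lineMap_le_of_mem_Icc (a b a' b' : E) {t : ℝ}
    (ht : t ∈ Set.Icc (0 : ℝ) 1) :
    dist (lineMap a b t) (lineMap a' b' t) ≤ (1 - t) * dist a a' + t * dist b b' := by
  simp only [lineMap_apply_module]
  refine (dist_add_add_le _ _ _ _).trans_eq ?_
  rw [dist_smul₀, dist_smul₀, Real.norm_of_nonneg (sub_nonneg.2 ht.2), Real.norm_of_nonneg ht.1]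

end Geodesic

/-- In an injective metric space, any two pairs of points can be joined by constant-speed
geodesics `γ₁, γ₂ : [0,1] → X` that fellow-travel: `dist (γ₁ t) (γ₂ t)` is bounded by the
convex combination `(1 - t) * dist x₁ x₂ + t * dist y₁ y₂`. -/
theorem injective_fellow_travelling_geodesics (X : Type w) [MetricSpace X]
    (hX : IsInjMetric.{u, v} X) (x₁ y₁ x₂ y₂ : X) :
    ∃ γ₁ γ₂ : ℝ → X,
      γ₁ 0 = x₁ ∧ γ₁ 1 = y₁ ∧ γ₂ 0 = x₂ ∧ γ₂ 1 = y₂ ∧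
      (∀ s ∈ Set.Icc (0 : ℝ) 1, ∀ t ∈ Set.Icc (0 : ℝ) 1,
        dist (γ₁ s) (γ₁ t) = |s - t| * dist x₁ y₁) ∧
      (∀ s ∈ Set.Icc (0 : ℝ) 1, ∀ t ∈ Set.Icc (0 : ℝ) 1,
        dist (γ₂ s) (γ₂ t) = |s - t| * dist x₂ y₂) ∧
      (∀ t ∈ Set.Icc (0 : ℝ) 1,
        dist (γ₁ t) (γ₂ t) ≤ (1 - t) * dist x₁ x₂ + t * dist y₁ y₂) := by
  let p : Fin 4 → X := ![x₁, y₁, x₂, y₂]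
  obtain ⟨g, hg, hgF⟩ := hX.exists_lipschitzWith_leftInverse_frechetMap p
  let γ (i j : Fin 4) (t : ℝ) : X := g (lineMap (frechetMap p (p i)) (frechetMap p (p j)) t)
  have hγ_zero (i j : Fin 4) : γ i j 0 = p i := by simp [γ, hgF]
  have hγ_one (i j : Fin 4) : γ i j 1 = p j := by simp [γ, hgF]
  have hγ_geodesic (i j : Fin 4) : ∀ s ∈ Set.Icc (0 : ℝ) 1, ∀ t ∈ Set.Icc (0 : ℝ) 1,
      dist (γ i j s) (γ i j t) = |s - t| * dist (p i) (p j) := fun s hs t ht => by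
    rw [dist_comp_lineMap_of_lipschitzWith hg (by rw [hgF, hgF, dist_frechetMap_apply]) hs ht,
      dist_frechetMap_apply]
  refine ⟨γ 0 1, γ 2 3, hγ_zero 0 1, hγ_one 0 1, hγ_zero 2 3, hγ_one 2 3,
    hγ_geodesic 0 1, hγ_geodesic 2 3, fun t ht => ?_⟩
  calc dist (γ 0 1 t) (γ 2 3 t)
      ≤ dist (lineMap (frechetMap p (p 0)) (frechetMap p (p 1)) t)
          (lineMap (frechetMap p (p 2)) (frechetMap p (p 3)) t) :=
        (hg.dist_le_mul _ _).trans_eq (one_mul _)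
    _ ≤ _ := dist_lineMap_lineMap_le_of_mem_Icc _ _ _ _ ht
    _ = _ := by rw [dist_frechetMap_apply, dist_frechetMap_apply]; rfl
end

section
/- Every injective metric space is a complete metric space. -/
universe u v w

/-! A Cauchy sequence `x` in `X` lies in the image of an isometric embedding `j : Y → X` of a
copy `Y` of its range in the lowest universe. Extending `j` along `Y → Completion Y` gives a
1-Lipschitz `g : Completion Y → X`, and `x` converges to the image under `g` of the limit of its
lift to the completion. -/

open UniformSpace

theorem isometry_uliftUp {α : Type*} [PseudoEMetricSpace α] :
    Isometry (ULift.up.{u} : α → ULift α) :=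
  fun _ _ => rfl

theorem isometry_uliftDown {α : Type*} [PseudoEMetricSpace α] :
    Isometry (ULift.down.{u} : ULift α → α) :=
  fun _ _ => rfl

theorem IsInjMetric.down {X : Type w} [MetricSpace X] (hX : IsInjMetric.{max u u', max v v'} X) :
    IsInjMetric.{u', v'} X := by
  intro Y Z _ _ i f hi hf
  obtain ⟨g, hg, hgi⟩ := hX _ _ (ULift.up.{v} ∘ i ∘ ULift.down.{u}) (f ∘ ULift.down)
    (isometry_uliftUp.comp (hi.comp isometry_uliftDown))
    (by simpa using hf.comp isometry_uliftDown.lipschitz)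
  exact ⟨g ∘ ULift.up, by simpa using hg.comp isometry_uliftUp.lipschitz,
    fun y => hgi (ULift.up y)⟩

theorem exists_isometry_comp_eq_of_small {ι : Type*} [Small.{u} ι] {X : Type w} [MetricSpace X]
    (x : ι → X) : ∃ (Y : Type u) (_ : MetricSpace Y) (j : Y → X), Isometry j ∧
      ∃ s : ι → Y, j ∘ s = x := by
  let j : Shrink.{u} (Set.range x) → X := Subtype.val ∘ (equivShrink _).symm
  let _ : MetricSpace (Shrink.{u} (Set.range x)) :=
    .induced j (Subtype.val_injective.comp (equivShrink _).symm.injective) inferInstance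
  refine ⟨_, ‹_›, j, Isometry.of_dist_eq fun _ _ => rfl, equivShrink _ ∘ Set.rangeFactorization x,
    ?_⟩
  ext i
  simp [j, Set.rangeFactorization]

/-- Every injective metric space is complete. -/
theorem injective_is_complete (X : Type w) [MetricSpace X]
    (hX : IsInjMetric.{u, v} X) : CompleteSpace X := by
  refine Metric.complete_of_cauchySeq_tendsto fun x hx => ?_
  obtain ⟨Y, _, j, hj, s, rfl⟩ := exists_isometry_comp_eq_of_small.{0} x
  obtain ⟨g, hg, hgj⟩ := (hX.down : IsInjMetric.{0, 0} X) Y (Completion Y) (↑) j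
    Completion.coe_isometry hj.lipschitz
  have hs : CauchySeq ((↑) ∘ s : ℕ → Completion Y) :=
    (Completion.uniformContinuous_coe Y).comp_cauchySeq (hj.isUniformInducing.cauchy_map_iff.1 hx)
  obtain ⟨z, hz⟩ := cauchySeq_tendsto_of_complete hs
  refine ⟨g z, ?_⟩
  simpa [Function.comp_def, hgj] using (hg.continuous.tendsto z).comp hz
end

section
/- Let ι be a finite type and equip the space ι → ℝ with the supremum metric dist(u, v) = max_{i ∈ ι} |u(i) − v(i)|. Then ι → ℝ is hyperconvex: for every family of points (x_k)_{k ∈ K} in ι → ℝ and nonnegative radii (r_k)_{k ∈ K} with dist(x_k, x_l) ≤ r_k + r_l for all k, l ∈ K, there exists z ∈ (ι → ℝ) with dist(z, x_k) ≤ r_k for all k ∈ K. -/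
universe u v w

/-! A family of pairwise-intersecting closed intervals `[x k - r k, x k + r k]` has a common
point, e.g. the infimum of the right endpoints. Balls in the sup metric on `ι → ℝ` are boxes,
i.e. products of such intervals, so one solves the problem coordinatewise. -/

/-- The radii are not required to be nonnegative: this follows from the hypothesis with `k = l`. -/
def IsHyperconvex (X : Type*) [PseudoMetricSpace X] : Prop :=
  ∀ (K : Type w) (x : K → X) (r : K → ℝ),
    (∀ k l, dist (x k) (x l) ≤ r k + r l) → ∃ z, ∀ k, dist z (x k) ≤ r k

lemma radius_nonneg_of_dist_le_add {X K : Type*} [PseudoMetricSpace X] {x : K → X} {r : K → ℝ}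
    (h : ∀ k l, dist (x k) (x l) ≤ r k + r l) (k : K) : 0 ≤ r k := by
  have := h k k
  rw [dist_self] at this
  linarith

theorem Real.isHyperconvex : IsHyperconvex.{w} ℝ := by
  intro K x r h
  rcases isEmpty_or_nonempty K with hK | hK
  · exact ⟨0, isEmptyElim⟩
  have left_le_right (k l : K) : x k - r k ≤ x l + r l := by
    linarith [(abs_le.mp ((Real.dist_eq _ _).symm.trans_le (h k l))).2]
  have hbdd : BddBelow (Set.range fun l => x l + r l) :=
    ⟨x (Classical.arbitrary K) - r (Classical.arbitrary K), by
      rintro _ ⟨l, rfl⟩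
      exact left_le_right _ l⟩
  refine ⟨⨅ l, x l + r l, fun k => ?_⟩
  have hle : ⨅ l, x l + r l ≤ x k + r k := ciInf_le hbdd k
  have hge : x k - r k ≤ ⨅ l, x l + r l := le_ciInf (left_le_right k)
  rw [Real.dist_eq, abs_le]
  constructor <;> linarith

theorem IsHyperconvex.pi {ι : Type*} [Fintype ι] {π : ι → Type*} [∀ i, PseudoMetricSpace (π i)]
    (hπ : ∀ i, IsHyperconvex.{w} (π i)) : IsHyperconvex.{w} (∀ i, π i) := by
  intro K x r h
  have hcoord (i : ι) : ∃ zi, ∀ k, dist zi (x k i) ≤ r k :=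
    hπ i K (fun k => x k i) r fun k l => (dist_le_pi_dist (x k) (x l) i).trans (h k l)
  choose z hz using hcoord
  exact ⟨z, fun k => (dist_pi_le_iff (radius_nonneg_of_dist_le_add h k)).2 fun i => hz i k⟩

theorem pi_real_hyperconvex_general (ι : Type u) [Fintype ι] (K : Type v)
    (x : K → ι → ℝ) (r : K → ℝ)
    (h : ∀ k l, dist (x k) (x l) ≤ r k + r l) :
    ∃ z : ι → ℝ, ∀ k, dist z (x k) ≤ r k :=
  IsHyperconvex.pi (fun _ => Real.isHyperconvex) K x r h

/-- For a finite index type `ι`, the space `ι → ℝ` with the supremum metric is hyperconvex: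
every family of pairwise-intersecting closed balls has a common point. -/
theorem pi_real_hyperconvex (ι : Type u) [Fintype ι] (K : Type v)
    (x : K → ι → ℝ) (r : K → ℝ) (hr : ∀ k, 0 ≤ r k)
    (h : ∀ k l, dist (x k) (x l) ≤ r k + r l) :
    ∃ z : ι → ℝ, ∀ k, dist z (x k) ≤ r k :=
  pi_real_hyperconvex_general ι K x r h
end

section
/- Every hyperconvex metric space X is injective: for all metric spaces Y and Z, every isometric embedding i : Y → Z, and every 1-Lipschitz map f : Y → X, there exists a 1-Lipschitz map g : Z → X with g ∘ i = f. -/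
/-! Aronszajn–Panitchpakdi: by Zorn's lemma, the graph of `f ∘ i⁻¹` on `i '' Y` is contained in a
maximal graph of a partial 1-Lipschitz map `Z ⇀ X`. Such a graph is total: at a missing point `z`,
the balls of radii `dist z s` around the values at the points `s` of its domain pairwise satisfy
the hyperconvexity condition, so they share a point, which can be added to the graph. -/

universe u w u₁ u₂

/-- A metric space `X` is hyperconvex if for every family of points `x i` and nonnegative
radii `r i` with `dist (x i) (x j) ≤ r i + r j` for all `i, j`, there is a point `z` with
`dist z (x i) ≤ r i` for all `i`. -/
def Hyperconvex (X : Type w) [MetricSpace X] : Prop :=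
  ∀ (ι : Type u) (x : ι → X) (r : ι → ℝ), (∀ i, 0 ≤ r i) →
    (∀ i j, dist (x i) (x j) ≤ r i + r j) → ∃ z : X, ∀ i, dist z (x i) ≤ r i

open Set

variable {Z : Type*} {X : Type*} [PseudoMetricSpace Z] [MetricSpace X]

def IsShortGraph (G : Set (Z × X)) : Prop :=
  ∀ p ∈ G, ∀ q ∈ G, dist p.2 q.2 ≤ dist p.1 q.1

namespace IsShortGraph

variable {G : Set (Z × X)}

theorem eq_of_mem (hG : IsShortGraph G) {z : Z} {x x' : X} (hx : (z, x) ∈ G)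
    (hx' : (z, x') ∈ G) : x = x' :=
  dist_le_zero.1 <| by simpa using hG _ hx _ hx'

theorem lipschitzWith (hG : IsShortGraph G) {g : Z → X} (hg : ∀ z, (z, g z) ∈ G) :
    LipschitzWith 1 g :=
  LipschitzWith.of_dist_le_mul fun a b => by simpa using hG _ (hg a) _ (hg b)

theorem insert (hG : IsShortGraph G) {z : Z} {w : X} (hw : ∀ q ∈ G, dist w q.2 ≤ dist z q.1) :
    IsShortGraph (insert (z, w) G) := by
  rintro p (rfl | hp) q (rfl | hq)
  · simp
  · exact hw q hq
  · simpa [dist_comm] using hw p hp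
  · exact hG p hp q hq

end IsShortGraph

theorem isShortGraph_range {ι : Type*} {p : ι → Z} {g : ι → X}
    (h : ∀ a b, dist (g a) (g b) ≤ dist (p a) (p b)) :
    IsShortGraph (range fun a => (p a, g a)) := by
  rintro _ ⟨a, rfl⟩ _ ⟨b, rfl⟩
  exact h a b

theorem isShortGraph_sUnion {c : Set (Set (Z × X))} (hc : ∀ G ∈ c, IsShortGraph G)
    (hchain : IsChain (· ⊆ ·) c) : IsShortGraph (⋃₀ c) := by
  rintro p ⟨A, hA, hpA⟩ q ⟨B, hB, hqB⟩
  rcases hchain.total hA hB with hAB | hBA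
  · exact hc B hB p (hAB hpA) q hqB
  · exact hc A hA p hpA q (hBA hqB)

theorem Hyperconvex.exists_dist_le_of_isShortGraph {Z : Type u} [PseudoMetricSpace Z]
    (hX : Hyperconvex.{u} X) {G : Set (Z × X)} (hG : IsShortGraph G) (z : Z) :
    ∃ w : X, ∀ q ∈ G, dist w q.2 ≤ dist z q.1 := by
  let value (s : {s : Z // ∃ x, (s, x) ∈ G}) : X := s.2.choose
  have hvalue (s) : (s.1, value s) ∈ G := s.2.choose_spec
  obtain ⟨w, hw⟩ := hX _ value (fun s => dist z s.1) (fun _ => dist_nonneg) fun s t =>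
    calc dist (value s) (value t) ≤ dist s.1 t.1 := hG _ (hvalue s) _ (hvalue t)
      _ ≤ dist z s.1 + dist z t.1 := dist_triangle_left _ _ _
  refine ⟨w, fun q hq => ?_⟩
  rw [hG.eq_of_mem hq (hvalue ⟨q.1, q.2, hq⟩)]
  exact hw _

/-- Every hyperconvex metric space is injective: 1-Lipschitz maps to it extend along
isometric embeddings. -/
theorem hyperconvex_is_injective (X : Type w) [MetricSpace X]
    (hX : Hyperconvex.{u₂} X)
    (Y : Type u₁) (Z : Type u₂) [MetricSpace Y] [MetricSpace Z]
    (i : Y → Z) (f : Y → X) (hi : Isometry i) (hf : LipschitzWith 1 f) :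
    ∃ g : Z → X, LipschitzWith 1 g ∧ ∀ y, g (i y) = f y := by
  have hf₀ : IsShortGraph (range fun y => (i y, f y)) :=
    isShortGraph_range fun a b => by simpa [hi.dist_eq] using hf.dist_le_mul a b
  obtain ⟨G, hf₀G, hG⟩ := zorn_subset_nonempty {G : Set (Z × X) | IsShortGraph G}
    (fun c hc hchain _ => ⟨⋃₀ c, isShortGraph_sUnion hc hchain, fun _ => subset_sUnion_of_mem⟩)
    _ hf₀
  have htotal (z : Z) : ∃ x, (z, x) ∈ G := by
    obtain ⟨w, hw⟩ := hX.exists_dist_le_of_isShortGraph hG.prop z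
    exact ⟨w, hG.mem_of_prop_insert (hG.prop.insert hw)⟩
  choose g hg using htotal
  exact ⟨g, hG.prop.lipschitzWith hg, fun y => hG.prop.eq_of_mem (hg (i y)) (hf₀G ⟨y, rfl⟩)⟩
end

section
/- Let X be a metric space, let l : ℝ → X be a geodesic line, let π : X → ℝ be a nearest-point projection to l, and suppose l is D-strongly contracting with respect to π for some D ≥ 0. Let x, y ∈ X with |π(x) − π(y)| > 5D, and let γ : [0, dist(x,y)] → X be a geodesic from x to y. Then for every t ∈ ℝ lying between π(x) and π(y), the point l(t) lies in the 6D-neighborhood of the image of γ: infDist(l(t), range(γ)) ≤ 6D. -/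
/-- `π : X → ℝ` is a nearest-point projection to the line `l : ℝ → X` if `l (π x)` realizes
the distance from `x` to the range of `l`. -/
def IsNearestPointProj {X : Type*} [MetricSpace X] (l : ℝ → X) (π : X → ℝ) : Prop :=
  ∀ x : X, dist x (l (π x)) = Metric.infDist x (Set.range l)

/-- The line `l` is `D`-strongly contracting with respect to `π` if every closed ball
disjoint from the range of `l` has `π`-image of diameter at most `D`. -/
def StronglyContracting {X : Type*} [MetricSpace X] (l : ℝ → X) (π : X → ℝ) (D : ℝ) : Prop :=
  ∀ (c : X) (ρ : ℝ), Metric.closedBall c ρ ∩ Set.range l = ∅ →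
    Metric.diam (π '' Metric.closedBall c ρ) ≤ D

/-!
Write `g s = π (γ s) - t` and `r s` for the distance from `γ s` to `l`; if `γ` avoids the
`6D`-ball around `l t`, then `6D < r s + |g s|` along `γ`. Strong contraction moves `g` by at most
`D` along any stretch of `γ` shorter than `r` at its start, so where `γ` is `2D`-far from `l` it
can be cut into hops of length `r - D/8 ≥ 15D/8`, each moving `g` by at most `D`: the projection
advances at most at `8/15` of the speed of `γ`. Where `γ` is `2D`-close to `l`, `|g| > 4D`,
so `γ` crosses over `t` along a stretch that is `2D`-far from `l`. Being a geodesic, `γ` is no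
longer between two points than their distances to `l` plus their projection gap, which is
incompatible with the slow progress, once the long hops near `t` (where `r > 6D - |g|`) and the
long first hop are counted.
-/

open Metric Set

namespace IsNearestPointProj

variable {X : Type*} [MetricSpace X] {l : ℝ → X} {π : X → ℝ}

theorem dist_le_abs_sub_add (hl : Isometry l) (hπ : IsNearestPointProj l π) (t : ℝ) (z : X) :
    dist (l t) z ≤ |π z - t| + infDist z (range l) :=
  calc dist (l t) z ≤ dist (l t) (l (π z)) + dist (l (π z)) z := dist_triangle _ _ _
    _ = |π z - t| + infDist z (range l) := by
      rw [hl.dist_eq, Real.dist_eq, abs_sub_comm, dist_comm, hπ z]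

theorem abs_sub_le (hl : Isometry l) (hπ : IsNearestPointProj l π) (z w : X) :
    |π z - π w| ≤ infDist z (range l) + dist z w + infDist w (range l) :=
  calc |π z - π w| = dist (l (π z)) (l (π w)) := by rw [hl.dist_eq, Real.dist_eq]
    _ ≤ dist (l (π z)) z + dist z w + dist w (l (π w)) := dist_triangle4 _ _ _ _
    _ = _ := by rw [dist_comm, hπ z, hπ w]

theorem dist_le (hl : Isometry l) (hπ : IsNearestPointProj l π) (z w : X) :
    dist z w ≤ infDist z (range l) + |π z - π w| + infDist w (range l) :=
  calc dist z w ≤ dist z (l (π z)) + dist (l (π z)) (l (π w)) + dist (l (π w)) w :=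
        dist_triangle4 _ _ _ _
    _ = _ := by rw [hπ z, hl.dist_eq, Real.dist_eq, dist_comm, hπ w]

theorem isBounded_image (hl : Isometry l) (hπ : IsNearestPointProj l π) {s : Set X}
    (hs : Bornology.IsBounded s) : Bornology.IsBounded (π '' s) := by
  obtain ⟨R, hR⟩ := hs.subset_closedBall (l 0)
  refine (isBounded_closedBall (x := (0 : ℝ)) (r := 2 * R)).subset ?_
  rintro _ ⟨z, hz, rfl⟩
  have hzR : dist z (l 0) ≤ R := hR hz
  have hinf : infDist z (range l) ≤ dist z (l 0) := infDist_le_dist_of_mem (mem_range_self 0)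
  rw [mem_closedBall, Real.dist_eq, sub_zero]
  calc |π z| = dist (l (π z)) (l 0) := by rw [hl.dist_eq, Real.dist_eq, sub_zero]
    _ ≤ dist (l (π z)) z + dist z (l 0) := dist_triangle _ _ _
    _ ≤ 2 * R := by rw [dist_comm, hπ z]; linarith

end IsNearestPointProj

namespace StronglyContracting

variable {X : Type*} [MetricSpace X] {l : ℝ → X} {π : X → ℝ} {D : ℝ}

theorem nonneg (hsc : StronglyContracting l π D) : 0 ≤ D := by
  simpa using hsc (l 0) (-1) (by simp)

theorem mono (hsc : StronglyContracting l π D) {D' : ℝ} (hD : D ≤ D') :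
    StronglyContracting l π D' :=
  fun c ρ h => (hsc c ρ h).trans hD

theorem abs_sub_le_of_dist_lt (hsc : StronglyContracting l π D) (hl : Isometry l)
    (hπ : IsNearestPointProj l π) {z w : X} (h : dist z w < infDist z (range l)) :
    |π z - π w| ≤ D := by
  have hdisj : closedBall z (dist z w) ∩ range l = ∅ := by
    refine eq_empty_iff_forall_notMem.2 fun u ⟨hu, hul⟩ => ?_
    have := infDist_le_dist_of_mem (x := z) hul
    rw [mem_closedBall, dist_comm] at hu
    linarith
  calc |π z - π w| = dist (π z) (π w) := (Real.dist_eq _ _).symm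
    _ ≤ diam (π '' closedBall z (dist z w)) :=
      dist_le_diam_of_mem (hπ.isBounded_image hl isBounded_closedBall)
        (mem_image_of_mem π (mem_closedBall_self dist_nonneg))
        (mem_image_of_mem π (by rw [mem_closedBall, dist_comm]))
    _ ≤ D := hsc z _ hdisj

end StronglyContracting

/-- The profile of a geodesic `γ : [0, L] → X` along a `D`-strongly contracting line: `g s` is
the (shifted) projection of `γ s` to the line and `r s` the distance from `γ s` to the line. -/
structure ContractingProfile (L D : ℝ) (g r : ℝ → ℝ) : Prop where
  continuousOn : ContinuousOn r (Icc 0 L)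
  drift_le : ∀ s ∈ Icc 0 L, ∀ s' ∈ Icc 0 L, |s' - s| < r s → |g s' - g s| ≤ D
  proj_le : ∀ s ∈ Icc 0 L, ∀ s' ∈ Icc 0 L, |g s - g s'| ≤ r s + |s - s'| + r s'
  length_le : ∀ s ∈ Icc 0 L, ∀ s' ∈ Icc 0 L, |s - s'| ≤ r s + |g s - g s'| + r s'

theorem contractingProfile_of_geodesic {X : Type*} [MetricSpace X] {l : ℝ → X} {π : X → ℝ}
    {D : ℝ} (hl : Isometry l) (hπ : IsNearestPointProj l π)
    (hsc : StronglyContracting l π D) {L : ℝ} {γ : ℝ → X}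
    (hγ : ∀ s ∈ Icc 0 L, ∀ s' ∈ Icc 0 L, dist (γ s) (γ s') = |s - s'|) (t : ℝ) :
    ContractingProfile L D (fun s => π (γ s) - t) (fun s => infDist (γ s) (range l)) where
  continuousOn := by
    have : LipschitzOnWith 1 γ (Icc 0 L) := LipschitzOnWith.of_dist_le_mul fun s hs s' hs' => by
      rw [hγ s hs s' hs', NNReal.coe_one, one_mul, Real.dist_eq]
    exact (continuous_infDist_pt _).comp_continuousOn this.continuousOn
  drift_le s hs s' hs' h := by
    rw [sub_sub_sub_cancel_right, abs_sub_comm]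
    exact hsc.abs_sub_le_of_dist_lt hl hπ (by rwa [hγ s hs s' hs', abs_sub_comm])
  proj_le s hs s' hs' := by
    simpa only [sub_sub_sub_cancel_right, hγ s hs s' hs'] using hπ.abs_sub_le hl (γ s) (γ s')
  length_le s hs s' hs' := by
    simpa only [sub_sub_sub_cancel_right, hγ s hs s' hs'] using hπ.dist_le hl (γ s) (γ s')

theorem sub_mem_Icc_zero {L s : ℝ} (hs : s ∈ Icc 0 L) : L - s ∈ Icc 0 L :=
  sub_mem_Icc_iff_right.2 (by simpa using hs)

/-- A chain of `n` hops of length `r - D/8` from `s`, whose last point `u` is within one hop of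
`θ`. Its length `u - s` is at least `15D/8` per hop, plus `r s - 2D` for the first hop, plus
`4D - m` for the hop leaving the first point where `g` lies in `(c, c + D]`. -/
def HopChain (D θ c m : ℝ) (g r : ℝ → ℝ) (s : ℝ) : Prop :=
  ∃ (n : ℕ) (u : ℝ), u ∈ Ico s θ ∧ |g θ - g u| ≤ D ∧ g u - g s ≤ n * D ∧
    (n = 0 ∧ u = s ∨ 15 * D / 8 * n + (r s - 2 * D) ≤ u - s) ∧
    (g s ≤ c → c + D < g u → 15 * D / 8 * n + (r s - 2 * D) + (4 * D - m) ≤ u - s)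

namespace ContractingProfile

variable {L D : ℝ} {g r : ℝ → ℝ}

theorem neg (h : ContractingProfile L D g r) : ContractingProfile L D (fun s => -g s) r where
  continuousOn := h.continuousOn
  drift_le s hs s' hs' hlt := by
    rw [neg_sub_neg, abs_sub_comm]
    exact h.drift_le s hs s' hs' hlt
  proj_le s hs s' hs' := by
    rw [neg_sub_neg, abs_sub_comm]
    exact h.proj_le s hs s' hs'
  length_le s hs s' hs' := by
    rw [neg_sub_neg, abs_sub_comm (g s')]
    exact h.length_le s hs s' hs'

theorem reverse (h : ContractingProfile L D g r) :
    ContractingProfile L D (fun s => -g (L - s)) (fun s => r (L - s)) where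
  continuousOn := h.continuousOn.comp (continuous_const.sub continuous_id).continuousOn
    fun _ => sub_mem_Icc_zero
  drift_le s hs s' hs' hlt := by
    rw [neg_sub_neg, abs_sub_comm]
    refine h.drift_le _ (sub_mem_Icc_zero hs) _ (sub_mem_Icc_zero hs') ?_
    rwa [sub_sub_sub_cancel_left, abs_sub_comm]
  proj_le s hs s' hs' := by
    have := h.proj_le _ (sub_mem_Icc_zero hs) _ (sub_mem_Icc_zero hs')
    rw [sub_sub_sub_cancel_left, abs_sub_comm s'] at this
    rwa [neg_sub_neg, abs_sub_comm]
  length_le s hs s' hs' := by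
    have := h.length_le _ (sub_mem_Icc_zero hs) _ (sub_mem_Icc_zero hs')
    rw [sub_sub_sub_cancel_left, abs_sub_comm s'] at this
    rwa [neg_sub_neg, abs_sub_comm (g (L - s'))]

theorem four_mul_lt_abs_sub (h : ContractingProfile L D g r)
    (havoid : ∀ s ∈ Icc 0 L, 6 * D < r s + |g s|) {s s' : ℝ} (hs : s ∈ Icc 0 L)
    (hs' : s' ∈ Icc 0 L) (hrs : r s ≤ 2 * D) (hrs' : r s' ≤ 2 * D) (hgs : g s ≤ 0)
    (hgs' : 0 ≤ g s') : 4 * D < |s - s'| := by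
  have h₁ := havoid s hs
  have h₂ := havoid s' hs'
  have h₃ := h.proj_le s hs s' hs'
  rw [abs_of_nonpos hgs] at h₁
  rw [abs_of_nonneg hgs'] at h₂
  rw [abs_of_nonpos (by linarith)] at h₃
  linarith

theorem isClosed_near_nonpos (h : ContractingProfile L D g r) (hD : 0 < D)
    (havoid : ∀ s ∈ Icc 0 L, 6 * D < r s + |g s|) :
    IsClosed {s ∈ Icc 0 L | r s ≤ 2 * D ∧ g s ≤ 0} := by
  set N := {s ∈ Icc 0 L | r s ≤ 2 * D ∧ 0 ≤ g s}
  have hsep : {s ∈ Icc 0 L | r s ≤ 2 * D ∧ g s ≤ 0} =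
      (Icc 0 L ∩ r ⁻¹' Iic (2 * D)) ∩ ⋂ s' ∈ N, {s | 4 * D ≤ |s - s'|} := by
    ext s
    simp only [mem_sep_iff, mem_inter_iff, mem_preimage, mem_Iic, mem_iInter]
    refine ⟨fun ⟨hs, hrs, hgs⟩ => ⟨⟨hs, hrs⟩, fun s' ⟨hs', hrs', hgs'⟩ =>
      (h.four_mul_lt_abs_sub havoid hs hs' hrs hrs' hgs hgs').le⟩, fun ⟨⟨hs, hrs⟩, hN⟩ =>
      ⟨hs, hrs, ?_⟩⟩
    by_contra! hgs
    have : 4 * D ≤ |s - s| := hN s ⟨hs, hrs, hgs.le⟩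
    rw [sub_self, abs_zero] at this
    linarith
  rw [hsep]
  exact (h.continuousOn.preimage_isClosed_of_isClosed isClosed_Icc isClosed_Iic).inter
    (isClosed_biInter fun s' _ => isClosed_le continuous_const (by fun_prop))

theorem hopChain_of_sub_lt (h : ContractingProfile L D g r) (hD : 0 < D) {θ c m s : ℝ}
    (hs : s ∈ Icc 0 L) (hθ : θ ∈ Icc 0 L) (hsθ : s < θ) (hθs : θ - s < r s) :
    HopChain D θ c m g r s :=
  ⟨0, s, ⟨le_rfl, hsθ⟩, h.drift_le s hs θ hθ (by rwa [abs_of_pos (sub_pos.2 hsθ)]),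
    by simp, Or.inl ⟨rfl, rfl⟩, fun hc hcs => by linarith⟩

theorem hopChain_of_hop (h : ContractingProfile L D g r) (hD : 0 < D)
    (havoid : ∀ s ∈ Icc 0 L, 6 * D < r s + |g s|) {θ c m s : ℝ} (hcm : |c| ≤ m)
    (hcm' : |c + D| ≤ m) (hs : s ∈ Icc 0 L) (hθ : θ ≤ L) (hrs : 2 * D < r s)
    (hhop : s + (r s - D / 8) < θ) (hrs' : 2 * D < r (s + (r s - D / 8)))
    (hchain : HopChain D θ c m g r (s + (r s - D / 8))) : HopChain D θ c m g r s := by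
  set s' := s + (r s - D / 8) with hs's
  obtain ⟨n, u, hu, hθu, hgu, hweak, hbonus⟩ := hchain
  have hs' : s' ∈ Icc 0 L := ⟨by linarith [hs.1], by linarith⟩
  have hstep : g s' - g s ≤ D :=
    (abs_le.1 (h.drift_le s hs s' hs' (by rw [abs_of_pos] <;> linarith))).2
  refine ⟨n + 1, u, ⟨by linarith [hu.1], hu.2⟩, hθu, ?_, Or.inr ?_, fun hc hcu => ?_⟩
  · push_cast
    linarith
  · push_cast
    rcases hweak with ⟨rfl, rfl⟩ | hweak <;> linarith
  · have key : 15 * D / 8 * n + (4 * D - m) ≤ u - s' := by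
      by_cases hcs' : g s' ≤ c
      · linarith [hbonus hcs' hcu]
      · -- the hop lands in `(c, c + D]`, where `|g| ≤ m` forces a long hop
        have hgs' : |g s'| ≤ m := abs_le.2
          ⟨by linarith [(abs_le.1 hcm).1], by linarith [(abs_le.1 hcm').2]⟩
        have := havoid s' hs'
        rcases hweak with ⟨-, rfl⟩ | hweak <;> linarith
    push_cast
    linarith

theorem exists_hopChain (h : ContractingProfile L D g r) (hD : 0 < D)
    (havoid : ∀ s ∈ Icc 0 L, 6 * D < r s + |g s|) {θ c m : ℝ} (hcm : |c| ≤ m)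
    (hcm' : |c + D| ≤ m) (hθ : θ ≤ L) {s : ℝ} (hs : 0 ≤ s) (hsθ : s < θ)
    (hr : ∀ v ∈ Ico s θ, 2 * D < r v) : HopChain D θ c m g r s := by
  obtain ⟨N, hN⟩ := exists_nat_ge ((θ - s) / (15 * D / 8))
  rw [div_le_iff₀ (by positivity)] at hN
  induction N generalizing s with
  | zero => simp only [Nat.cast_zero, zero_mul] at hN; linarith
  | succ N ih =>
    have hrs := hr s ⟨le_rfl, hsθ⟩
    by_cases hhop : s + (r s - D / 8) < θ
    · refine h.hopChain_of_hop hD havoid hcm hcm' ⟨hs, by linarith⟩ hθ hrs hhop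
        (hr _ ⟨by linarith, hhop⟩) (ih (by linarith) hhop (fun v hv => hr v ⟨?_, hv.2⟩) ?_)
      · linarith [hv.1]
      · push_cast at hN
        linarith
    · exact h.hopChain_of_sub_lt hD ⟨hs, by linarith⟩ ⟨by linarith, hθ⟩ hsθ (by linarith)

theorem false_of_approach (h : ContractingProfile L D g r) (hD : 0 < D)
    (havoid : ∀ s ∈ Icc 0 L, 6 * D < r s + |g s|) {a q : ℝ} (ha : 0 ≤ a) (haq : a < q)
    (hq : q ≤ L) (hr : ∀ s ∈ Ico a q, 2 * D < r s) (hga : g a ≤ 0) (hrq : r q ≤ 2 * D)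
    (hgq : 4 * D < g q) : False := by
  obtain ⟨n, u, hu, hqu, hgu, -, hbonus⟩ := h.exists_hopChain hD havoid (c := D / 2)
    (m := 3 * D / 2) (by rw [abs_of_pos (by positivity)]; linarith)
    (by rw [abs_of_pos (by positivity)]; linarith) hq ha haq hr
  have hqu' := (abs_le.1 hqu).2
  have hlen := h.length_le a ⟨ha, by linarith⟩ q ⟨by linarith, hq⟩
  rw [abs_of_neg (by linarith : a - q < 0), abs_of_neg (by linarith : g a - g q < 0)] at hlen
  have := hbonus (by linarith) (by linarith)
  linarith [hu.2]

theorem false_of_far (h : ContractingProfile L D g r) (hD : 0 < D)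
    (havoid : ∀ s ∈ Icc 0 L, 6 * D < r s + |g s|) (hL : 0 ≤ L)
    (hr : ∀ s ∈ Icc 0 L, 2 * D < r s) (hg0 : g 0 ≤ 0) (hgL : 0 ≤ g L)
    (hsep : 5 * D < g L - g 0) : False := by
  have h0 : (0 : ℝ) ∈ Icc 0 L := ⟨le_rfl, hL⟩
  have hLL : L ∈ Icc 0 L := ⟨hL, le_rfl⟩
  have hrL := hr L hLL
  set θ := L - (r L - D / 8) with hθ
  have hθ0 : 0 < θ := by
    by_contra! hθ0
    have := h.drift_le L hLL 0 h0 (by rw [zero_sub, abs_neg, abs_of_nonneg hL]; linarith)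
    linarith [(abs_le.1 this).1]
  set c := min (D / 2) (g L - 25 * D / 8)
  have hc : -(25 * D / 8) ≤ c := le_min (by linarith) (by linarith)
  have hc' : c ≤ D / 2 := min_le_left _ _
  have hc'' : c ≤ g L - 25 * D / 8 := min_le_right _ _
  obtain ⟨n, u, hu, hθu, hgu, -, hbonus⟩ := h.exists_hopChain hD havoid (c := c)
    (m := 25 * D / 8) (abs_le.2 ⟨hc, by linarith⟩) (abs_le.2 ⟨by linarith, by linarith⟩)
    (by linarith) le_rfl hθ0 (fun s hs => hr s ⟨hs.1, by linarith [hs.2]⟩)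
  have hθL := (abs_le.1 (h.drift_le L hLL θ ⟨hθ0.le, by linarith⟩
    (by rw [abs_of_neg] <;> linarith))).1
  have hlen := h.length_le 0 h0 L hLL
  rw [zero_sub, abs_neg, abs_of_nonneg hL, abs_of_neg (by linarith : g 0 - g L < 0)] at hlen
  have := hbonus (le_min (by linarith) (by linarith)) (by linarith [(abs_le.1 hθu).2])
  have hn : (3 : ℝ) < n := by
    by_contra! hn
    nlinarith [(abs_le.1 hθu).2]
  have hn4 : (4 : ℝ) ≤ n := by exact_mod_cast (show 3 < n by exact_mod_cast hn)
  nlinarith [hu.2, (abs_le.1 hθu).2]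

theorem exists_far_start (h : ContractingProfile L D g r) (hD : 0 < D)
    (havoid : ∀ s ∈ Icc 0 L, 6 * D < r s + |g s|) (hg0 : g 0 ≤ 0) {q : ℝ}
    (hq : q ∈ Icc 0 L) (hrq : r q ≤ 2 * D) (hgq : 0 ≤ g q)
    (hbefore : ∀ s ∈ Ico 0 q, r s ≤ 2 * D → g s ≤ 0) :
    ∃ a, 0 ≤ a ∧ a < q ∧ g a ≤ 0 ∧ ∀ s ∈ Ico a q, 2 * D < r s := by
  have hsL : ∀ s ∈ Ico 0 q, s ∈ Icc 0 L := fun s hs => ⟨hs.1, by linarith [hs.2, hq.2]⟩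
  set P := {s ∈ Icc 0 L | r s ≤ 2 * D ∧ g s ≤ 0} ∩ Iic q
  have hPq : BddAbove P := ⟨q, fun s hs => hs.2⟩
  rcases P.eq_empty_or_nonempty with hP | hP
  · have hq0 : 0 < q := by
      have := havoid q hq
      rw [abs_of_nonneg hgq] at this
      exact hq.1.lt_of_ne (by rintro rfl; linarith)
    refine ⟨0, le_rfl, hq0, hg0, fun s hs => ?_⟩
    by_contra! hrs
    exact hP.subset ⟨⟨hsL s hs, hrs, hbefore s hs hrs⟩, hs.2.le⟩
  · set p := sSup P
    obtain ⟨⟨hp, hrp, hgp⟩, hpq⟩ : p ∈ P :=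
      ((h.isClosed_near_nonpos hD havoid).inter isClosed_Iic).csSup_mem hP hPq
    have hsep := h.four_mul_lt_abs_sub havoid hp hq hrp hrq hgp hgq
    rw [abs_of_nonpos (by linarith [mem_Iic.1 hpq])] at hsep
    have hr : ∀ s ∈ Ico (p + D) q, 2 * D < r s := fun s hs => by
      by_contra! hrs
      have hs' : s ∈ Ico 0 q := ⟨by linarith [hp.1, hs.1], hs.2⟩
      have := le_csSup hPq ⟨⟨hsL s hs', hrs, hbefore s hs' hrs⟩, hs.2.le⟩
      linarith [hs.1]
    have hpD : p + D ∈ Icc 0 L := ⟨by linarith [hp.1], by linarith [hq.2]⟩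
    have hrpD := hr (p + D) ⟨le_rfl, by linarith⟩
    have hdrift := (abs_le.1 (h.drift_le (p + D) hpD p hp
      (by rw [sub_add_cancel_left, abs_neg, abs_of_pos hD]; linarith))).1
    have := havoid p hp
    rw [abs_of_nonpos hgp] at this
    exact ⟨p + D, by linarith [hp.1], by linarith, by linarith, hr⟩

theorem false_of_near_nonneg (h : ContractingProfile L D g r) (hD : 0 < D)
    (havoid : ∀ s ∈ Icc 0 L, 6 * D < r s + |g s|) (hg0 : g 0 ≤ 0) {s₀ : ℝ}
    (hs₀ : s₀ ∈ Icc 0 L) (hrs₀ : r s₀ ≤ 2 * D) (hgs₀ : 0 ≤ g s₀) : False := by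
  set N := {s ∈ Icc 0 L | r s ≤ 2 * D ∧ 0 ≤ g s}
  have hN : IsClosed N := by
    simpa only [neg_nonpos] using
      h.neg.isClosed_near_nonpos hD (by simpa only [abs_neg] using havoid)
  have hbdd : BddBelow N := ⟨0, fun s hs => hs.1.1⟩
  obtain ⟨hq, hrq, hgq⟩ : sInf N ∈ N := hN.csInf_mem ⟨s₀, hs₀, hrs₀, hgs₀⟩ hbdd
  obtain ⟨a, ha, haq, hga, hr⟩ := h.exists_far_start hD havoid hg0 hq hrq hgq fun s hs hrs => by
    by_contra! hgs
    exact (csInf_le hbdd ⟨⟨hs.1, by linarith [hs.2, hq.2]⟩, hrs, hgs.le⟩).not_gt hs.2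
  have := havoid _ hq
  rw [abs_of_nonneg hgq] at this
  exact h.false_of_approach hD havoid ha haq hq.2 hr hga hrq (by linarith)

theorem exists_near_of_le (h : ContractingProfile L D g r) (hD : 0 < D) (hL : 0 ≤ L)
    (hg0 : g 0 ≤ 0) (hgL : 0 ≤ g L) (hsep : 5 * D < g L - g 0) :
    ∃ s ∈ Icc 0 L, r s + |g s| ≤ 6 * D := by
  by_contra! havoid
  by_cases hpos : ∃ s ∈ Icc 0 L, r s ≤ 2 * D ∧ 0 ≤ g s
  · obtain ⟨s, hs, hrs, hgs⟩ := hpos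
    exact h.false_of_near_nonneg hD havoid hg0 hs hrs hgs
  by_cases hneg : ∃ s ∈ Icc 0 L, r s ≤ 2 * D ∧ g s ≤ 0
  · obtain ⟨s, hs, hrs, hgs⟩ := hneg
    refine h.reverse.false_of_near_nonneg hD (fun s hs => ?_) (by simpa using hgL)
      (s₀ := L - s) (sub_mem_Icc_zero hs) (by simpa using hrs) (by simpa using hgs)
    simpa only [abs_neg] using havoid _ (sub_mem_Icc_zero hs)
  push Not at hpos hneg
  refine h.false_of_far hD havoid hL (fun s hs => ?_) hg0 hgL hsep
  by_contra! hrs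
  rcases le_total (g s) 0 with hgs | hgs
  · exact (hneg s hs hrs).not_ge hgs
  · exact (hpos s hs hrs).not_ge hgs

theorem exists_near (h : ContractingProfile L D g r) (hD : 0 < D) (hL : 0 ≤ L)
    (h0 : 0 ∈ uIcc (g 0) (g L)) (hsep : 5 * D < |g L - g 0|) :
    ∃ s ∈ Icc 0 L, r s + |g s| ≤ 6 * D := by
  rcases le_total (g 0) (g L) with hle | hle
  · rw [uIcc_of_le hle] at h0
    rw [abs_of_nonneg (sub_nonneg.2 hle)] at hsep
    exact h.exists_near_of_le hD hL h0.1 h0.2 hsep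
  · rw [uIcc_of_ge hle] at h0
    rw [abs_of_nonpos (sub_nonpos.2 hle)] at hsep
    simpa only [abs_neg] using
      h.neg.exists_near_of_le hD hL (by linarith [h0.2]) (by linarith [h0.1]) (by linarith)

end ContractingProfile

theorem strongly_contracting_bottleneck_general (X : Type*) [MetricSpace X]
    (l : ℝ → X) (hl : Isometry l) (π : X → ℝ) (hπ : IsNearestPointProj l π)
    (D : ℝ) (hsc : StronglyContracting l π D)
    (x y : X) (hfar : 5 * D < |π x - π y|)
    (γ : ℝ → X) (hγ0 : γ 0 = x) (hγ1 : γ (dist x y) = y)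
    (hγ : ∀ s ∈ Set.Icc (0 : ℝ) (dist x y), ∀ t ∈ Set.Icc (0 : ℝ) (dist x y),
      dist (γ s) (γ t) = |s - t|)
    (t : ℝ) (ht : t ∈ Set.uIcc (π x) (π y)) :
    Metric.infDist (l t) (γ '' Set.Icc (0 : ℝ) (dist x y)) ≤ 6 * D := by
  by_contra! hlt
  -- `D' > 0` keeps the hops of length `15 D' / 8` positive
  obtain ⟨D', hDD', hD'⟩ := exists_between (lt_min (c := |π x - π y| / 5)
    (by linarith : D < infDist (l t) (γ '' Icc 0 (dist x y)) / 6) (by linarith))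
  rw [lt_min_iff] at hD'
  have hprofile := contractingProfile_of_geodesic hl hπ (hsc.mono hDD'.le) hγ t
  obtain ⟨s, hs, hnear⟩ := hprofile.exists_near (hsc.nonneg.trans_lt hDD') dist_nonneg
    (by simpa only [hγ0, hγ1, ← image_sub_const_uIcc] using ⟨t, ht, sub_self t⟩)
    (by rw [hγ0, hγ1, sub_sub_sub_cancel_right, abs_sub_comm]; linarith)
  have := infDist_le_dist_of_mem (x := l t) (mem_image_of_mem γ hs)
  have := hπ.dist_le_abs_sub_add hl t (γ s)
  linarith

/-- If `l` is `D`-strongly contracting and `x, y` project more than `5D` apart along `l`,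
then every point of `l` between `π x` and `π y` lies in the `6D`-neighbourhood of any
geodesic from `x` to `y`. -/
theorem strongly_contracting_bottleneck (X : Type*) [MetricSpace X]
    (l : ℝ → X) (hl : Isometry l) (π : X → ℝ) (hπ : IsNearestPointProj l π)
    (D : ℝ) (hD : 0 ≤ D) (hsc : StronglyContracting l π D)
    (x y : X) (hfar : 5 * D < |π x - π y|)
    (γ : ℝ → X) (hγ0 : γ 0 = x) (hγ1 : γ (dist x y) = y)
    (hγ : ∀ s ∈ Set.Icc (0 : ℝ) (dist x y), ∀ t ∈ Set.Icc (0 : ℝ) (dist x y),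
      dist (γ s) (γ t) = |s - t|)
    (t : ℝ) (ht : t ∈ Set.uIcc (π x) (π y)) :
    Metric.infDist (l t) (γ '' Set.Icc (0 : ℝ) (dist x y)) ≤ 6 * D :=
  strongly_contracting_bottleneck_general X l hl π hπ D hsc x y hfar γ hγ0 hγ1 hγ t ht
end

section
/- For every Morse gauge M : [1,∞) × [0,∞) → [0,∞) there exists a constant D ≥ 0, depending only on M, such that the following holds: if X is an injective metric space, l : ℝ → X is a geodesic line that is M-Morse, and π : X → ℝ is a nearest-point projection to l, then l is D-strongly contracting with respect to π, i.e., every closed ball B ⊆ X disjoint from the range of l satisfies diam(π(B)) ≤ D. -/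
universe u v w

/-- The line `l` is `M`-Morse if every `(q, Q)`-quasi-geodesic with endpoints on the range
of `l` stays within `M q Q` of the range of `l`. -/
def IsMorseLine {X : Type*} [MetricSpace X] (l : ℝ → X) (M : ℝ → ℝ → ℝ) : Prop :=
  ∀ q Q : ℝ, 1 ≤ q → 0 ≤ Q → ∀ (a b : ℝ) (β : ℝ → X),
    (∀ s ∈ Set.Icc a b, ∀ t ∈ Set.Icc a b,
      (1 / q) * |s - t| - Q ≤ dist (β s) (β t) ∧ dist (β s) (β t) ≤ q * |s - t| + Q) →
    β a ∈ Set.range l → β b ∈ Set.range l →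
    ∀ t ∈ Set.Icc a b, Metric.infDist (β t) (Set.range l) ≤ M q Q

/-!
Injective metric spaces are hyperconvex: finitely many closed balls `B(p i, r i)` with
`d(p i, p j) ≤ r i + r j` have a common point. Choosing such points one after another produces discrete paths with
prescribed distances to finitely many anchors, and the Morse property applies to them through
the step function `u ↦ V ⌊u⌋₊`.

First, the discrete geodesic from `l (π z)` to `l s` through the tripod point of
`z, l (π z), l s` stays near `l`; hence `d(z, l s) ≥ d(z, l) + |s - π z| - K`. Second, if
`d(c, x) ≤ d(c, l) + d(x, l)` and `P = π x - π c` is large, hyperconvexity gives a tent-shaped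
path from `l (π c)` to `l (π x)` rising to height `P / 2`. The first step shows that it is a
quasi-geodesic and that its apex is still `P / 2 - K` away from `l`, so the Morse property
bounds `P`. Finally, a closed ball disjoint from `l` has radius at most `d(c, l)` about its
centre `c`, so any two of its points project near `π c`.
-/

open Metric Set

theorem exists_nat_mul_eq_of_one_le {L : ℝ} (hL : 1 ≤ L) :
    ∃ (n : ℕ) (τ : ℝ), 1 / 2 ≤ τ ∧ τ ≤ 1 ∧ n * τ = L := by
  have hn : L ≤ ⌈L⌉₊ := Nat.le_ceil L
  have hn' : (⌈L⌉₊ : ℝ) < L + 1 := Nat.ceil_lt_add_one (by linarith)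
  have hpos : (0 : ℝ) < ⌈L⌉₊ := by linarith
  refine ⟨⌈L⌉₊, L / ⌈L⌉₊, ?_, (div_le_one hpos).2 hn, mul_div_cancel₀ L hpos.ne'⟩
  rw [le_div_iff₀ hpos]
  linarith

theorem exists_nat_abs_mul_sub_le {t τ : ℝ} {n : ℕ} (hτ : 0 < τ) (ht : 0 ≤ t)
    (htn : t ≤ n * τ) : ∃ j ≤ n, |j * τ - t| ≤ τ := by
  refine ⟨⌊t / τ⌋₊, Nat.floor_le_of_le ((div_le_iff₀ hτ).2 htn), abs_le.2 ⟨?_, ?_⟩⟩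
  · have := (div_lt_iff₀ hτ).1 (Nat.lt_floor_add_one (t / τ))
    linarith
  · have := (le_div_iff₀ hτ).1 (Nat.floor_le (div_nonneg ht hτ.le))
    linarith

theorem abs_natFloor_sub_natFloor_sub_abs_lt {s t : ℝ} (hs : 0 ≤ s) (ht : 0 ≤ t) :
    |(|(⌊s⌋₊ : ℝ) - ⌊t⌋₊| - |s - t|)| < 1 := by
  refine lt_of_le_of_lt (abs_abs_sub_abs_le_abs_sub _ _) (abs_sub_lt_iff.2 ⟨?_, ?_⟩) <;>
    linarith [Nat.floor_le hs, Nat.floor_le ht, Nat.lt_floor_add_one s, Nat.lt_floor_add_one t]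

section Chains

variable {X : Type*} [PseudoMetricSpace X] {V : ℕ → X} {τ : ℝ}

theorem dist_le_mul_of_dist_succ_le {i j : ℕ} (hij : i ≤ j)
    (h : ∀ k, i ≤ k → k < j → dist (V k) (V (k + 1)) ≤ τ) :
    dist (V i) (V j) ≤ ((j : ℝ) - i) * τ := by
  have := dist_le_Ico_sum_of_dist_le (f := V) (d := fun _ => τ) hij fun hik hkj => h _ hik hkj
  rwa [Finset.sum_const, Nat.card_Ico, nsmul_eq_mul, Nat.cast_sub hij] at this

theorem mul_le_dist_of_dist_succ_le {n : ℕ} (h : ∀ k < n, dist (V k) (V (k + 1)) ≤ τ)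
    (hn : n * τ ≤ dist (V 0) (V n)) {i j : ℕ} (hij : i ≤ j) (hjn : j ≤ n) :
    ((j : ℝ) - i) * τ ≤ dist (V i) (V j) := by
  have h₀ := dist_le_mul_of_dist_succ_le (V := V) (Nat.zero_le i) fun k _ hk => h k (by omega)
  have h₁ := dist_le_mul_of_dist_succ_le (V := V) hjn fun k _ hk => h k hk
  have := dist_triangle4 (V 0) (V i) (V j) (V n)
  push_cast at h₀
  nlinarith

end Chains

theorem range_comp_neg {X : Type*} (l : ℝ → X) : range (l ∘ Neg.neg) = range l :=
  neg_surjective.range_comp l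

section Line

variable {X : Type*} [MetricSpace X] {l : ℝ → X} {π : X → ℝ} {M : ℝ → ℝ → ℝ}

theorem IsNearestPointProj.comp_neg (h : IsNearestPointProj l π) :
    IsNearestPointProj (l ∘ Neg.neg) (Neg.neg ∘ π) := fun x => by
  simpa [range_comp_neg] using h x

theorem IsMorseLine.comp_neg (h : IsMorseLine l M) : IsMorseLine (l ∘ Neg.neg) M := by
  simpa only [IsMorseLine, range_comp_neg] using h

theorem IsMorseLine.nonneg (hM : IsMorseLine l M) {q Q : ℝ} (hq : 1 ≤ q) (hQ : 0 ≤ Q) :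
    0 ≤ M q Q := by
  have := hM q Q hq hQ 0 0 (fun _ => l 0) (fun s hs t ht => by
    obtain ⟨rfl, rfl⟩ : s = 0 ∧ t = 0 := ⟨le_antisymm hs.2 hs.1, le_antisymm ht.2 ht.1⟩
    simp [hQ]) (mem_range_self 0) (mem_range_self 0) 0 ⟨le_rfl, le_rfl⟩
  rwa [infDist_zero_of_mem (mem_range_self 0)] at this

theorem IsMorseLine.infDist_le_of_chain (hM : IsMorseLine l M) {q Q : ℝ} (hq : 1 ≤ q)
    (hQ : 0 ≤ Q) {W : ℕ → X} {n : ℕ} (h₀ : W 0 ∈ range l) (hn : W n ∈ range l)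
    (hstep : ∀ j < n, dist (W j) (W (j + 1)) ≤ q)
    (hlower : ∀ i j, i ≤ j → j ≤ n → ((j : ℝ) - i) / q - Q ≤ dist (W i) (W j))
    {j : ℕ} (hj : j ≤ n) : infDist (W j) (range l) ≤ M q (Q + q) := by
  have hW : ∀ i j, i ≤ n → j ≤ n →
      |(i : ℝ) - j| / q - Q ≤ dist (W i) (W j) ∧ dist (W i) (W j) ≤ q * |(i : ℝ) - j| := by
    have key : ∀ i j, i ≤ j → j ≤ n →
        |(i : ℝ) - j| / q - Q ≤ dist (W i) (W j) ∧ dist (W i) (W j) ≤ q * |(i : ℝ) - j| :=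
      fun i j hij hjn => by
        rw [abs_sub_comm, abs_of_nonneg (sub_nonneg.2 (Nat.cast_le.2 hij)), mul_comm]
        exact ⟨hlower i j hij hjn,
          dist_le_mul_of_dist_succ_le hij fun k _ hk => hstep k (by omega)⟩
    intro i j hi hj
    rcases le_total i j with hij | hji
    · exact key i j hij hj
    · rw [dist_comm, abs_sub_comm]; exact key j i hji hi
  have hquasi : ∀ s ∈ Icc (0 : ℝ) n, ∀ t ∈ Icc (0 : ℝ) n,
      (1 / q) * |s - t| - (Q + q) ≤ dist (W ⌊s⌋₊) (W ⌊t⌋₊) ∧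
        dist (W ⌊s⌋₊) (W ⌊t⌋₊) ≤ q * |s - t| + (Q + q) := by
    intro s hs t ht
    have hfl := abs_lt.1 (abs_natFloor_sub_natFloor_sub_abs_lt hs.1 ht.1)
    obtain ⟨hlo, hup⟩ := hW ⌊s⌋₊ ⌊t⌋₊ (Nat.floor_le_of_le hs.2) (Nat.floor_le_of_le ht.2)
    have hq₀ : 0 < q := by linarith
    have hinv : 1 / q ≤ 1 := by rw [div_le_one hq₀]; exact hq
    constructor
    · have : (|s - t| - 1) / q ≤ |(⌊s⌋₊ : ℝ) - ⌊t⌋₊| / q := by gcongr; linarith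
      rw [sub_div] at this
      rw [one_div_mul_eq_div]
      linarith
    · nlinarith
  simpa using hM q (Q + q) hq (by linarith) 0 n (fun u => W ⌊u⌋₊) hquasi (by simpa using h₀)
    (by simpa using hn) j ⟨Nat.cast_nonneg j, Nat.cast_le.2 hj⟩

theorem IsMorseLine.infDist_le_of_geodesic_chain (hM : IsMorseLine l M) {V : ℕ → X} {n : ℕ}
    {τ : ℝ} (hτ : 1 / 2 ≤ τ) (hτ₁ : τ ≤ 1) (h₀ : V 0 ∈ range l) (hn : V n ∈ range l)
    (hstep : ∀ j < n, dist (V j) (V (j + 1)) ≤ τ) (hgeod : n * τ ≤ dist (V 0) (V n)) {j : ℕ}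
    (hj : j ≤ n) : infDist (V j) (range l) ≤ M 2 2 := by
  have := hM.infDist_le_of_chain (q := 2) (Q := 0) (by norm_num) le_rfl h₀ hn
    (fun k hk => (hstep k hk).trans (by linarith)) (fun i k hik hkn => ?_) hj
  · rwa [zero_add] at this
  have := mul_le_dist_of_dist_succ_le hstep hgeod hik hkn
  have : (0 : ℝ) ≤ k - i := sub_nonneg.2 (Nat.cast_le.2 hik)
  nlinarith

/-- Under `IsNearestPointProj l π`, the left-hand side is the length of the path
`z → l (π z) → l s`. -/
def IsAlmostGeodesicViaProj (l : ℝ → X) (π : X → ℝ) (K : ℝ) : Prop :=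
  ∀ z s, infDist z (range l) + |s - π z| ≤ dist z (l s) + K

theorem IsAlmostGeodesicViaProj.nonneg {K : ℝ} (hK : IsAlmostGeodesicViaProj l π K) : 0 ≤ K := by
  have := hK (l 0) 0
  rw [infDist_zero_of_mem (mem_range_self 0), dist_self] at this
  linarith [abs_nonneg (0 - π (l 0))]

theorem IsAlmostGeodesicViaProj.abs_proj_sub_proj_le {K : ℝ}
    (hK : IsAlmostGeodesicViaProj l π K) (hproj : IsNearestPointProj l π) (y c : X) :
    |π y - π c| ≤ dist y c - infDist c (range l) + infDist y (range l) + K := by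
  have := hK c (π y)
  linarith [dist_triangle c y (l (π y)), hproj y, dist_comm c y]

theorem IsAlmostGeodesicViaProj.le_dist {K : ℝ} (hK : IsAlmostGeodesicViaProj l π K)
    {y y' : X} {a a' b b' : ℝ} (hy : |π y - a| ≤ infDist y (range l) - b + K)
    (hy' : dist y' (l a') ≤ b') : |a' - a| - b' + b - 2 * K ≤ dist y y' := by
  have := hK y a'
  linarith [abs_sub_le a' (π y) a, dist_triangle y y' (l a'), dist_comm y' (l a')]

end Line

section Tent

variable {X : Type*} [MetricSpace X] {l : ℝ → X} {π : X → ℝ}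

def tentAnchors (l : ℝ → X) (π : X → ℝ) (c x : X) (t : ℝ) : Fin 3 → X :=
  ![l (π c + t), c, x]

/-- At time `t` the tent path lies at height `min t (π x - π c - t)` over `l (π c + t)`; its
distances to `c` and `x` are those of `l (π c + t)`, lowered by that height. -/
noncomputable def tentRadii (l : ℝ → X) (π : X → ℝ) (c x : X) (t : ℝ) : Fin 3 → ℝ :=
  ![min t (π x - π c - t), infDist c (range l) - min t (π x - π c - t) + t,
    infDist x (range l) - min t (π x - π c - t) + (π x - π c - t)]

theorem dist_tentAnchors_zero_le (hl : Isometry l) (hproj : IsNearestPointProj l π) {c x : X}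
    (hP : π c ≤ π x) (i : Fin 3) :
    dist (l (π c)) (tentAnchors l π c x 0 i) ≤ tentRadii l π c x 0 i := by
  have := dist_triangle (l (π c)) (l (π x)) x
  rw [hl.dist_eq, Real.dist_eq, abs_sub_comm, abs_of_nonneg (sub_nonneg.2 hP)] at this
  fin_cases i <;> simp only [tentAnchors, tentRadii, Fin.zero_eta, Fin.mk_one, Fin.reduceFinMk,
      Fin.isValue, Matrix.cons_val_zero, Matrix.cons_val_one, Matrix.cons_val, dist_self, add_zero,
      sub_zero, min_eq_left (sub_nonneg.2 hP)] <;>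
    linarith [hproj c, hproj x, dist_comm c (l (π c)), dist_comm x (l (π x))]

theorem tentRadii_pairwise (hl : Isometry l) (hproj : IsNearestPointProj l π) {c x : X}
    (hcx : dist c x ≤ infDist c (range l) + infDist x (range l)) {t : ℝ} (ht₀ : 0 ≤ t)
    (ht : t ≤ π x - π c) (i i' : Fin 3) :
    dist (tentAnchors l π c x t i) (tentAnchors l π c x t i') ≤
      tentRadii l π c x t i + tentRadii l π c x t i' := by
  have hlc : dist (l (π c + t)) c ≤ infDist c (range l) + t := by
    have := dist_triangle (l (π c + t)) (l (π c)) c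
    rw [hl.dist_eq, Real.dist_eq, add_sub_cancel_left, abs_of_nonneg ht₀] at this
    linarith [hproj c, dist_comm c (l (π c))]
  have hlx : dist (l (π c + t)) x ≤ infDist x (range l) + (π x - π c - t) := by
    have := dist_triangle (l (π c + t)) (l (π x)) x
    rw [hl.dist_eq, Real.dist_eq, abs_sub_comm, show π x - (π c + t) = π x - π c - t by ring,
      abs_of_nonneg (by linarith)] at this
    linarith [hproj x, dist_comm x (l (π x))]
  have := min_le_left t (π x - π c - t)
  have := min_le_right t (π x - π c - t)
  have : 0 ≤ min t (π x - π c - t) := le_min ht₀ (by linarith)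
  have := infDist_nonneg (x := c) (s := range l)
  have := infDist_nonneg (x := x) (s := range l)
  fin_cases i <;> fin_cases i' <;> simp only [tentAnchors, tentRadii, Fin.zero_eta, Fin.mk_one,
      Fin.reduceFinMk, Fin.isValue, Matrix.cons_val_zero, Matrix.cons_val_one, Matrix.cons_val,
      dist_self] <;>
    linarith [dist_comm c x, dist_comm c (l (π c + t)), dist_comm x (l (π c + t))]

theorem tentRadii_add_dist_le (hl : Isometry l) (c x : X) (t : ℝ) {τ : ℝ} (hτ : 0 ≤ τ)
    (i : Fin 3) :
    tentRadii l π c x t i + dist (tentAnchors l π c x t i) (tentAnchors l π c x (t + τ) i) ≤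
      tentRadii l π c x (t + τ) i + 2 * τ := by
  have hstep : dist (l (π c + t)) (l (π c + (t + τ))) = τ := by
    rw [hl.dist_eq, Real.dist_eq, show π c + t - (π c + (t + τ)) = -τ by ring, abs_neg,
      abs_of_nonneg hτ]
  have hmin := abs_le.1 (abs_min_sub_min_le_max t (π x - π c - t) (t + τ) (π x - π c - (t + τ)))
  rw [show t - (t + τ) = -τ by ring, show π x - π c - t - (π x - π c - (t + τ)) = τ by ring,
    abs_neg, abs_of_nonneg hτ, max_self] at hmin
  fin_cases i <;> simp only [tentAnchors, tentRadii, Fin.zero_eta, Fin.mk_one, Fin.reduceFinMk,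
      Fin.isValue, Matrix.cons_val_zero, Matrix.cons_val_one, Matrix.cons_val, dist_self, add_zero,
      hstep] <;>
    linarith

end Tent

section Injective

variable {X : Type w} [MetricSpace X] {l : ℝ → X} {π : X → ℝ} {M : ℝ → ℝ → ℝ} {K : ℝ}

theorem IsInjMetric.exists_forall_dist_le_s16 (hX : IsInjMetric.{u, v} X)
    {ι : Type} [Fintype ι] (p : ι → X) (r : ι → ℝ) (hr : ∀ i j, dist (p i) (p j) ≤ r i + r j) :
    ∃ z, ∀ i, dist z (p i) ≤ r i := by
  -- `F` embeds the points isometrically into `ℓ^∞(ι)`, where balls are boxes and `ζ` lies in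
  -- all the boxes around the `F i`.
  let F : ι → ι → ℝ := fun i j => dist (p i) (p j)
  have hF : ∀ i i', dist (F i) (F i') = dist (p i) (p i') := fun i i' =>
    le_antisymm ((dist_pi_le_iff dist_nonneg).2 fun j => abs_dist_sub_le _ _ _)
      (by simpa [F, Real.dist_eq] using dist_le_pi_dist (F i) (F i') i')
  let ζ : ι → ℝ := fun j => ⨆ i, (dist (p i) (p j) - r i)
  have hζ : ∀ i, dist ζ (F i) ≤ r i := by
    intro i
    have : Nonempty ι := ⟨i⟩
    refine (dist_pi_le_iff (by linarith [hr i i, dist_self (p i)])).2 fun j =>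
      abs_sub_le_iff.2 ⟨?_, ?_⟩
    · refine sub_le_iff_le_add'.2 (ciSup_le fun k => ?_)
      linarith [hr k i, dist_triangle (p k) (p i) (p j)]
    · linarith [le_ciSup (Set.finite_range fun k => dist (p k) (p j) - r k).bddAbove i]
  let f : ULift.{u} (range F) → X := fun y => p (rangeSplitting F y.down)
  have hf : Isometry f := Isometry.of_dist_eq fun y y' => by
    rw [← hF, apply_rangeSplitting F, apply_rangeSplitting F]; rfl
  obtain ⟨g, hg, hgf⟩ := hX (ULift.{u} (range F)) (ULift.{v} (ι → ℝ)) (fun y => ⟨y.down⟩) f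
    (Isometry.of_dist_eq fun _ _ => rfl) hf.lipschitz
  refine ⟨g ⟨ζ⟩, fun i => ?_⟩
  have hfi : f ⟨⟨F i, mem_range_self i⟩⟩ = p i := by
    rw [← dist_eq_zero, ← hF, apply_rangeSplitting F, dist_self]
  calc dist (g ⟨ζ⟩) (p i) = dist (g ⟨ζ⟩) (g ⟨F i⟩) := by rw [← hfi, ← hgf]
    _ ≤ dist ζ (F i) := by simpa using hg.dist_le_mul (⟨ζ⟩ : ULift (ι → ℝ)) ⟨F i⟩
    _ ≤ r i := hζ i

theorem IsInjMetric.exists_chain (hX : IsInjMetric.{u, v} X)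
    {ι : Type} [Fintype ι] (p : ℕ → ι → X) (r : ℕ → ι → ℝ) {x₀ : X} {τ : ℝ} (hτ : 0 ≤ τ)
    (n : ℕ) (h₀ : ∀ i, dist x₀ (p 0 i) ≤ r 0 i)
    (hpair : ∀ j ≤ n, ∀ i i', dist (p j i) (p j i') ≤ r j i + r j i')
    (hstep : ∀ j < n, ∀ i, r j i + dist (p j i) (p (j + 1) i) ≤ r (j + 1) i + τ) :
    ∃ V : ℕ → X, V 0 = x₀ ∧ (∀ j < n, dist (V j) (V (j + 1)) ≤ τ) ∧
      ∀ j ≤ n, ∀ i, dist (V j) (p j i) ≤ r j i := by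
  induction n with
  | zero =>
    refine ⟨fun _ => x₀, rfl, by simp, fun j hj => ?_⟩
    obtain rfl := Nat.le_zero.1 hj
    exact h₀
  | succ n ih =>
    obtain ⟨V, hV₀, hVstep, hVp⟩ :=
      ih (fun j hj => hpair j (by omega)) (fun j hj => hstep j (by omega))
    have hnext : ∀ i, dist (V n) (p (n + 1) i) ≤ τ + r (n + 1) i := fun i => by
      linarith [hVp n le_rfl i, hstep n (by omega) i, dist_triangle (V n) (p n i) (p (n + 1) i)]
    obtain ⟨w, hw⟩ := hX.exists_forall_dist_le_s16 (Option.elim · (V n) (p (n + 1)))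
      (Option.elim · τ (r (n + 1))) (by
        rintro (_ | i) (_ | i')
        · simpa using by linarith
        · exact hnext i'
        · simpa [dist_comm, add_comm] using hnext i
        · exact hpair (n + 1) le_rfl i i')
    refine ⟨fun j => if j = n + 1 then w else V j, by simpa using hV₀, fun j hj => ?_,
      fun j hj => ?_⟩
    · rcases eq_or_lt_of_le (Nat.lt_succ_iff.1 hj) with rfl | hj
      · simpa [dist_comm] using hw none
      · simpa [show j ≠ n + 1 by omega, hj.ne] using hVstep j hj
    · rcases eq_or_lt_of_le hj with rfl | hj
      · simpa using fun i => hw (some i)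
      · simpa [hj.ne] using hVp j (by omega)

theorem IsInjMetric.exists_chain_near (hX : IsInjMetric.{u, v} X) {a b z : X} {g t₀ τ : ℝ}
    {n : ℕ} (hτ : 0 ≤ τ) (hn : n * τ = dist a b) (haz : dist a z ≤ g + t₀)
    (hbz : dist b z ≤ g + (dist a b - t₀)) :
    ∃ V : ℕ → X, V 0 = a ∧ V n = b ∧ (∀ j < n, dist (V j) (V (j + 1)) ≤ τ) ∧
      ∀ j ≤ n, dist (V j) z ≤ g + |j * τ - t₀| := by
  have hg : 0 ≤ g := by linarith [dist_triangle a z b, dist_comm b z]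
  obtain ⟨V, hV₀, hVstep, hVp⟩ := hX.exists_chain (x₀ := a) (fun _ => ![b, z])
    (fun j => ![dist a b - j * τ, g + |j * τ - t₀|]) hτ n
    (fun i => by
      fin_cases i
      · simp
      · simpa using haz.trans (by gcongr; exact le_abs_self _))
    (fun j hj i i' => by
      have hjn : j * τ ≤ dist a b := hn ▸ by gcongr
      have habs := le_abs_self ((j : ℝ) * τ - t₀)
      have habs' := abs_nonneg ((j : ℝ) * τ - t₀)
      fin_cases i <;> fin_cases i' <;> simp only [Fin.zero_eta, Fin.mk_one, Fin.isValue,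
        Matrix.cons_val_zero, Matrix.cons_val_one, Matrix.cons_val_fin_one, dist_self] <;>
        linarith [dist_comm z b])
    (fun j hj i => by
      have habs := abs_sub_abs_le_abs_sub ((j : ℝ) * τ - t₀) ((j + 1 : ℝ) * τ - t₀)
      have h1 : |(j : ℝ) * τ - t₀ - ((j + 1) * τ - t₀)| = τ := by
        rw [show (j : ℝ) * τ - t₀ - ((j + 1) * τ - t₀) = -τ by ring, abs_neg, abs_of_nonneg hτ]
      fin_cases i <;> simp only [Fin.zero_eta, Fin.mk_one, Fin.isValue, Matrix.cons_val_zero,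
        Matrix.cons_val_one, Matrix.cons_val_fin_one, dist_self, Nat.cast_add, Nat.cast_one] <;>
        linarith)
  refine ⟨V, hV₀, dist_le_zero.1 ?_, hVstep, fun j hj => by simpa using hVp j hj 1⟩
  simpa [hn] using hVp n le_rfl 0

theorem IsInjMetric.exists_tent_chain (hX : IsInjMetric.{u, v} X) (hl : Isometry l)
    (hproj : IsNearestPointProj l π) {c x : X}
    (hcx : dist c x ≤ infDist c (range l) + infDist x (range l)) {τ : ℝ} (hτ : 0 ≤ τ) {n : ℕ}
    (hn : n * τ = π x - π c) :
    ∃ V : ℕ → X, V 0 = l (π c) ∧ V n = l (π x) ∧ (∀ j < n, dist (V j) (V (j + 1)) ≤ 2 * τ) ∧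
      ∀ j ≤ n, ∀ i, dist (V j) (tentAnchors l π c x (j * τ) i) ≤ tentRadii l π c x (j * τ) i := by
  have hP : π c ≤ π x := sub_nonneg.1 (hn ▸ by positivity)
  obtain ⟨V, hV₀, hVstep, hVp⟩ := hX.exists_chain (x₀ := l (π c))
    (fun j => tentAnchors l π c x (j * τ)) (fun j => tentRadii l π c x (j * τ))
    (by positivity : 0 ≤ 2 * τ) n (by simpa using dist_tentAnchors_zero_le hl hproj hP)
    (fun j hj => tentRadii_pairwise hl hproj hcx (by positivity) (hn ▸ by gcongr))
    (fun j _ => by simpa [add_mul] using tentRadii_add_dist_le hl c x (j * τ) hτ)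
  have hend := hVp n le_rfl 0
  simp only [tentAnchors, tentRadii, Fin.isValue, Matrix.cons_val_zero, hn,
    sub_self, min_eq_right (sub_nonneg.2 hP), add_sub_cancel] at hend
  exact ⟨V, hV₀, dist_le_zero.1 hend, hVstep, hVp⟩

theorem IsMorseLine.isAlmostGeodesicViaProj (hM : IsMorseLine l M) (hX : IsInjMetric.{u, v} X)
    (hl : Isometry l) (hproj : IsNearestPointProj l π) :
    IsAlmostGeodesicViaProj l π (2 * M 2 2 + 2) := by
  intro z s
  set r := infDist z (range l) with hr
  set L := |s - π z|
  set D := dist z (l s)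
  have hrD : r ≤ D := infDist_le_dist_of_mem (mem_range_self s)
  have hm := hM.nonneg (q := 2) (Q := 2) (by norm_num) (by norm_num)
  rcases lt_or_ge L 1 with hL | hL
  · linarith
  have hab : dist (l (π z)) (l s) = L := by rw [hl.dist_eq, Real.dist_eq, abs_sub_comm]
  have hza : dist z (l (π z)) = r := hproj z
  have hDL : D ≤ r + L := by linarith [dist_triangle z (l (π z)) (l s)]
  have hLD : L ≤ r + D := by linarith [dist_triangle (l (π z)) z (l s), dist_comm z (l (π z))]
  -- the tripod point of `l (π z)`, `z`, `l s` lies at distance `t₀` from `l (π z)` and `r - t₀`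
  -- from `z`; the Morse property pulls it to `l`, which bounds `t₀`
  set t₀ := (r - D + L) / 2 with ht₀
  obtain ⟨n, τ, hτ, hτ₁, hnτ⟩ := exists_nat_mul_eq_of_one_le hL
  obtain ⟨V, hV₀, hVn, hVstep, hVz⟩ := hX.exists_chain_near (a := l (π z)) (z := z)
    (g := r - t₀) (t₀ := t₀) (by linarith) (hnτ.trans hab.symm)
    (by rw [dist_comm, hza]; linarith) (by rw [dist_comm, hab]; linarith)
  obtain ⟨j, hjn, hj⟩ := exists_nat_abs_mul_sub_le (t := t₀) (n := n) (by linarith) (by linarith)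
    (by linarith)
  have hVj := hM.infDist_le_of_geodesic_chain hτ hτ₁ (hV₀ ▸ mem_range_self _)
    (hVn ▸ mem_range_self _) hVstep (by rw [hV₀, hVn, hab, hnτ]) hjn
  have := infDist_le_infDist_add_dist (s := range l) (x := z) (y := V j)
  linarith [hVz j hjn, dist_comm z (V j)]

theorem IsAlmostGeodesicViaProj.proj_sub_proj_le (hK : IsAlmostGeodesicViaProj l π K)
    (hX : IsInjMetric.{u, v} X) (hl : Isometry l) (hproj : IsNearestPointProj l π)
    (hM : IsMorseLine l M) {c x : X}
    (hcx : dist c x ≤ infDist c (range l) + infDist x (range l)) :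
    π x - π c ≤ 2 * (M 2 (2 * K + 2) + K) + 2 := by
  have hK₀ := hK.nonneg
  have hm := hM.nonneg (q := 2) (Q := 2 * K + 2) (by norm_num) (by linarith)
  set P := π x - π c
  rcases le_or_gt P 2 with hP | hP
  · linarith
  obtain ⟨k, τ, hτ, hτ₁, hkτ⟩ := exists_nat_mul_eq_of_one_le (L := P / 2) (by linarith)
  obtain ⟨V, hV₀, hVn, hVstep, hVp⟩ := hX.exists_tent_chain hl hproj hcx (n := 2 * k)
    (by linarith) (by push_cast; linarith)
  have hbase : ∀ j ≤ 2 * k, dist (V j) (l (π c + j * τ)) ≤ min (j * τ) (P - j * τ) :=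
    fun j hj => hVp j hj 0
  have hpin : ∀ j ≤ 2 * k, |π (V j) - (π c + j * τ)| ≤
      infDist (V j) (range l) - min (j * τ) (P - j * τ) + K := fun j hj => by
    have hc := hK.abs_proj_sub_proj_le hproj (V j) c
    have hx := hK.abs_proj_sub_proj_le hproj (V j) x
    have hVc : dist (V j) c ≤ infDist c (range l) - min (j * τ) (P - j * τ) + j * τ :=
      hVp j hj 1
    have hVx : dist (V j) x ≤ infDist x (range l) - min (j * τ) (P - j * τ) + (P - j * τ) :=
      hVp j hj 2
    rw [abs_le] at hc hx ⊢
    constructor <;> linarith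
  have hVk : infDist (V k) (range l) ≤ M 2 (2 * K + 2) := by
    refine hM.infDist_le_of_chain (q := 2) (Q := 2 * K) (n := 2 * k) (j := k) (by norm_num)
      (by linarith) (hV₀ ▸ mem_range_self _) (hVn ▸ mem_range_self _)
      (fun j hj => (hVstep j hj).trans (by linarith)) (fun i j hij hj => ?_) (by omega)
    have h₁ := hK.le_dist (hpin i (hij.trans hj)) (hbase j hj)
    have h₂ := hK.le_dist (hpin j hj) (hbase i (hij.trans hj))
    rw [dist_comm, abs_sub_comm] at h₂
    have : (0 : ℝ) ≤ j - i := sub_nonneg.2 (Nat.cast_le.2 hij)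
    rw [show π c + j * τ - (π c + i * τ) = (j - i) * τ by ring, abs_of_nonneg (by positivity)]
      at h₁ h₂
    nlinarith
  have := hpin k (by omega)
  rw [hkτ, show P - P / 2 = P / 2 by ring, min_self] at this
  linarith [abs_nonneg (π (V k) - (π c + P / 2))]

def morseProjBound (M : ℝ → ℝ → ℝ) : ℝ :=
  2 * (M 2 (2 * (2 * M 2 2 + 2) + 2) + (2 * M 2 2 + 2)) + 2

theorem IsMorseLine.abs_proj_sub_proj_le (hM : IsMorseLine l M) (hX : IsInjMetric.{u, v} X)
    (hl : Isometry l) (hproj : IsNearestPointProj l π) {c x : X}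
    (hcx : dist c x ≤ infDist c (range l) + infDist x (range l)) :
    |π x - π c| ≤ morseProjBound M := by
  have hK : IsAlmostGeodesicViaProj l π (2 * M 2 2 + 2) := hM.isAlmostGeodesicViaProj hX hl hproj
  have hK' : IsAlmostGeodesicViaProj (l ∘ Neg.neg) (Neg.neg ∘ π) (2 * M 2 2 + 2) :=
    hM.comp_neg.isAlmostGeodesicViaProj hX (hl.comp isometry_neg) hproj.comp_neg
  have h₁ := hK.proj_sub_proj_le hX hl hproj hM hcx
  have h₂ := hK'.proj_sub_proj_le hX (hl.comp isometry_neg) hproj.comp_neg hM.comp_neg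
    (by rwa [range_comp_neg])
  simp only [Function.comp_apply] at h₂
  rw [morseProjBound, abs_le]
  constructor <;> linarith

end Injective

/-- Sisto–Zalloum: in an injective metric space, every `M`-Morse geodesic line is
`D`-strongly contracting, where `D` depends only on the Morse gauge `M`. -/
theorem morse_implies_strongly_contracting_in_injective (M : ℝ → ℝ → ℝ) :
    ∃ D : ℝ, 0 ≤ D ∧
      ∀ (X : Type w) [MetricSpace X], IsInjMetric.{u, v} X →
        ∀ l : ℝ → X, Isometry l →
          ∀ π : X → ℝ, IsNearestPointProj l π →
            IsMorseLine l M → StronglyContracting l π D := by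
  refine ⟨max 0 (2 * morseProjBound M), le_max_left _ _, ?_⟩
  intro X _ hX l hl π hproj hM c ρ hdisj
  have hρ : ρ ≤ infDist c (range l) := (le_infDist (range_nonempty l)).2 fun y hy =>
    not_lt.1 fun h => (eq_empty_iff_forall_notMem.1 hdisj) y ⟨mem_closedBall'.2 h.le, hy⟩
  have hball : ∀ y ∈ closedBall c ρ, |π y - π c| ≤ morseProjBound M := fun y hy =>
    hM.abs_proj_sub_proj_le hX hl hproj <| by
      linarith [mem_closedBall'.1 hy, infDist_nonneg (x := y) (s := range l)]
  refine diam_le_of_forall_dist_le (le_max_left _ _) ?_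
  rintro _ ⟨y, hy, rfl⟩ _ ⟨y', hy', rfl⟩
  have := abs_sub_le (π y) (π c) (π y')
  rw [abs_sub_comm (π c)] at this
  rw [Real.dist_eq]
  linarith [hball y hy, hball y' hy', le_max_right 0 (2 * morseProjBound M)]
end

section
/- For every D ≥ 0 there exists a Morse gauge M : [1,∞) × [0,∞) → [0,∞), depending only on D, such that the following holds: if X is a geodesic metric space, l : ℝ → X is a geodesic line, π : X → ℝ is a nearest-point projection to l, and l is D-strongly contracting with respect to π, then l is M-Morse: for all q ≥ 1, Q ≥ 0, every (q,Q)-quasi-geodesic β with both endpoints in the range of l satisfies infDist(β(t), range(l)) ≤ M(q,Q) for all t in its domain. -/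
universe w

/-- A metric space is geodesic if any two points are joined by an isometric embedding of
the interval `[0, dist x y]`. -/
def IsGeodesicSpace (X : Type*) [MetricSpace X] : Prop :=
  ∀ x y : X, ∃ γ : ℝ → X, γ 0 = x ∧ γ (dist x y) = y ∧
    ∀ s ∈ Set.Icc (0 : ℝ) (dist x y), ∀ t ∈ Set.Icc (0 : ℝ) (dist x y),
      dist (γ s) (γ t) = |s - t|

/-!
Sample the quasi-geodesic `β` on a grid of mesh `h = q (D + 1)`, so that consecutive samples are
at most `R = q h + Q` apart. Around any sample take the maximal run of samples at distance `> R`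
from the line. A ball of radius `R` centred on the run misses the line, so by strong contraction
each step of the run moves the projection by at most `D`, and the run's endpoints, which are
`R`-close to the line, are at most `4 R + n D` apart for a run of `n` steps. The lower
quasi-geodesic bound gives at least `(D + 1) n - (D + 1 + Q)`, so `n ≤ 4 R + D + 1 + Q`, and
every point of `β` is uniformly close to the line.
-/

open Metric Set

namespace IsNearestPointProj

variable {X : Type*} [MetricSpace X] {l : ℝ → X} {π : X → ℝ}

theorem dist_proj_le (hπ : IsNearestPointProj l π) (hl : Isometry l) (x y : X) :
    dist (π x) (π y) ≤ infDist x (range l) + dist x y + infDist y (range l) := by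
  rw [← hl.dist_eq, ← hπ x, ← hπ y, dist_comm x]
  exact dist_triangle4 _ _ _ _

theorem dist_le_dist_proj (hπ : IsNearestPointProj l π) (hl : Isometry l) (x y : X) :
    dist x y ≤ infDist x (range l) + dist (π x) (π y) + infDist y (range l) := by
  rw [← hl.dist_eq, ← hπ x, ← hπ y, dist_comm y]
  exact dist_triangle4 _ _ _ _

theorem isBounded_image_closedBall (hπ : IsNearestPointProj l π) (hl : Isometry l) (c : X)
    (ρ : ℝ) : Bornology.IsBounded (π '' closedBall c ρ) := by
  refine (isBounded_closedBall (x := π c) (r := 2 * infDist c (range l) + 2 * ρ)).subset ?_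
  rintro - ⟨x, hx, rfl⟩
  rw [mem_closedBall] at hx ⊢
  linarith [hπ.dist_proj_le hl x c, infDist_le_infDist_add_dist (x := x) (y := c) (s := range l)]

end IsNearestPointProj

theorem exists_nearest_le_and_ge {P : ℕ → Prop} {k N : ℕ} (h0 : P 0) (hN : P N) (hk : k ≤ N) :
    ∃ i j, i ≤ k ∧ k ≤ j ∧ j ≤ N ∧ P i ∧ P j ∧ ∀ m, i < m → m < j → ¬ P m := by
  classical
  have hex : ∃ m, k ≤ m ∧ P m := ⟨N, hk, hN⟩
  refine ⟨Nat.findGreatest P k, Nat.find hex, Nat.findGreatest_le k, (Nat.find_spec hex).1,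
    Nat.find_min' hex ⟨hk, hN⟩, Nat.findGreatest_spec (Nat.zero_le k) h0, (Nat.find_spec hex).2,
    fun m him hmj hm => ?_⟩
  rcases le_or_gt m k with hmk | hkm
  · exact Nat.findGreatest_is_greatest him hmk hm
  · exact Nat.find_min hex hmj ⟨hkm.le, hm⟩

section ClampedGrid

def clampedGrid (a b h : ℝ) (m : ℕ) : ℝ := min (a + m * h) b

variable {a b h : ℝ}

theorem clampedGrid_zero (hab : a ≤ b) : clampedGrid a b h 0 = a := by
  simp [clampedGrid, hab]

theorem clampedGrid_ceil (hh : 0 < h) :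
    clampedGrid a b h ⌈(b - a) / h⌉₊ = b := by
  have := Nat.le_ceil ((b - a) / h)
  rw [div_le_iff₀ hh] at this
  exact min_eq_right (by linarith)

theorem clampedGrid_mem_Icc (hab : a ≤ b) (hh : 0 ≤ h) (m : ℕ) : clampedGrid a b h m ∈ Icc a b :=
  ⟨le_min (le_add_of_nonneg_right (by positivity)) hab, min_le_right _ _⟩

theorem clampedGrid_le_add (hh : 0 ≤ h) {i k : ℕ} (hik : i ≤ k) :
    clampedGrid a b h k ≤ clampedGrid a b h i + (k - i) * h := by
  have hki : (0 : ℝ) ≤ k - i := by rw [sub_nonneg]; exact_mod_cast hik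
  rw [clampedGrid, clampedGrid, ← min_add_add_right]
  exact min_le_min (by linarith) (le_add_of_nonneg_right (by positivity))

theorem clampedGrid_mono (hh : 0 ≤ h) : Monotone (clampedGrid a b h) := fun i k hik =>
  min_le_min_right _ (by gcongr)

theorem abs_clampedGrid_sub_succ_le (hh : 0 ≤ h) (m : ℕ) :
    |clampedGrid a b h m - clampedGrid a b h (m + 1)| ≤ h := by
  rw [abs_sub_comm, abs_of_nonneg (sub_nonneg.2 (clampedGrid_mono hh m.le_succ))]
  have := clampedGrid_le_add (a := a) (b := b) hh m.le_succ
  push_cast at this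
  linarith

theorem sub_le_clampedGrid_sub (hab : a ≤ b) (hh : 0 < h) {i j : ℕ} (hj : j ≤ ⌈(b - a) / h⌉₊) :
    (j - i - 1) * h ≤ clampedGrid a b h j - clampedGrid a b h i := by
  have hceil := Nat.ceil_lt_add_one (div_nonneg (sub_nonneg.2 hab) hh.le)
  have hj' : (j : ℝ) ≤ ⌈(b - a) / h⌉₊ := by exact_mod_cast hj
  have hjb : (j - 1) * h ≤ b - a := by
    rw [← le_div_iff₀ hh]; linarith
  unfold clampedGrid
  linarith [min_le_left (a + i * h) b,
    le_min (show a + (j - 1) * h ≤ a + j * h by linarith) (show a + (j - 1) * h ≤ b by linarith)]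

theorem exists_clampedGrid_le_le_add {t : ℝ} (ht : t ∈ Icc a b) (hh : 0 < h) :
    ∃ k ≤ ⌈(b - a) / h⌉₊, clampedGrid a b h k ≤ t ∧ t ≤ clampedGrid a b h k + h := by
  have hta : 0 ≤ (t - a) / h := div_nonneg (sub_nonneg.2 ht.1) hh.le
  refine ⟨⌊(t - a) / h⌋₊, (Nat.floor_le_floor (by gcongr; exact ht.2)).trans
    (Nat.floor_le_ceil _), ?_⟩
  have hfl := Nat.floor_le hta
  have hlt := Nat.lt_floor_add_one ((t - a) / h)
  rw [le_div_iff₀ hh] at hfl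
  rw [div_lt_iff₀ hh] at hlt
  have hk : clampedGrid a b h ⌊(t - a) / h⌋₊ = a + ⌊(t - a) / h⌋₊ * h :=
    min_eq_left (by linarith [ht.2])
  rw [hk]
  constructor <;> linarith

end ClampedGrid

/-- `h` is the mesh of the parameter grid, and `R = q h + Q` bounds the jumps of the
quasi-geodesic between consecutive grid points. -/
def contractingMorseGauge (D q Q : ℝ) : ℝ :=
  let h := q * (D + 1)
  let R := q * h + Q
  R + q * h * (4 * R + D + Q + 2) + Q

theorem contractingMorseGauge_nonneg {D q Q : ℝ} (hD : 0 ≤ D) (hq : 1 ≤ q) (hQ : 0 ≤ Q) :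
    0 ≤ contractingMorseGauge D q Q := by
  have hh : 0 ≤ q * (D + 1) := mul_nonneg (by linarith) (by linarith)
  have hR : 0 ≤ q * (q * (D + 1)) + Q := add_nonneg (mul_nonneg (by linarith) hh) hQ
  exact add_nonneg (add_nonneg hR (mul_nonneg (mul_nonneg (by linarith) hh) (by linarith))) hQ

namespace StronglyContracting

variable {X : Type*} [MetricSpace X] {l : ℝ → X} {π : X → ℝ} {D : ℝ}

theorem dist_proj_le (hSC : StronglyContracting l π D) (hl : Isometry l)
    (hπ : IsNearestPointProj l π) {c x : X} {R : ℝ} (hR : 0 ≤ R)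
    (hc : R < infDist c (range l)) (hx : dist c x ≤ R) : dist (π c) (π x) ≤ D := by
  have hdisj : closedBall c R ∩ range l = ∅ := by
    refine eq_empty_iff_forall_notMem.2 fun z ⟨hzc, hzl⟩ => ?_
    linarith [infDist_le_dist_of_mem (x := c) hzl, mem_closedBall'.1 hzc]
  -- `diam` of an unbounded set is `0`, so the bound `hSC` needs the boundedness of `π '' ball`.
  exact (dist_le_diam_of_mem (hπ.isBounded_image_closedBall hl c R)
    (mem_image_of_mem π (mem_closedBall_self hR)) (mem_image_of_mem π (mem_closedBall'.2 hx))).trans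
    (hSC c R hdisj)

theorem dist_proj_le_of_chain (hSC : StronglyContracting l π D) (hl : Isometry l)
    (hπ : IsNearestPointProj l π) {x : ℕ → X} {R : ℝ} (hR : 0 ≤ R) {n : ℕ}
    (hstep : ∀ m < n, dist (x m) (x (m + 1)) ≤ R)
    (hfar : ∀ m < n, R < infDist (x m) (range l)) :
    dist (π (x 0)) (π (x n)) ≤ n * D := by
  induction n with
  | zero => simp
  | succ n ih =>
    calc dist (π (x 0)) (π (x (n + 1)))
        ≤ dist (π (x 0)) (π (x n)) + dist (π (x n)) (π (x (n + 1))) := dist_triangle _ _ _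
      _ ≤ n * D + D :=
        add_le_add (ih (fun m hm => hstep m (by omega)) (fun m hm => hfar m (by omega)))
          (hSC.dist_proj_le hl hπ hR (hfar n n.lt_succ_self) (hstep n n.lt_succ_self))
      _ = (n + 1 : ℕ) * D := by push_cast; ring

theorem dist_le_of_excursion (hSC : StronglyContracting l π D) (hl : Isometry l)
    (hπ : IsNearestPointProj l π) (hD : 0 ≤ D) {x : ℕ → X} {R : ℝ} (hR : 0 ≤ R) {i j : ℕ}
    (hij : i ≤ j) (hstep : ∀ m, i ≤ m → m < j → dist (x m) (x (m + 1)) ≤ R)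
    (hi : infDist (x i) (range l) ≤ R) (hj : infDist (x j) (range l) ≤ R)
    (hfar : ∀ m, i < m → m < j → R < infDist (x m) (range l)) :
    dist (x i) (x j) ≤ 4 * R + (j - i) * D := by
  obtain rfl | hij := hij.eq_or_lt
  · rw [dist_self, sub_self, zero_mul, add_zero]; positivity
  obtain ⟨n, rfl⟩ := Nat.exists_eq_add_of_lt hij
  have hchain : dist (π (x (i + 1))) (π (x (i + n + 1))) ≤ n * D :=
    hSC.dist_proj_le_of_chain hl hπ (x := fun m => x (i + m + 1)) hR
      (fun m hm => hstep _ (by omega) (by omega)) (fun m hm => hfar _ (by omega) (by omega))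
  have hfirst : dist (x i) (x (i + 1)) ≤ R := hstep i le_rfl (by omega)
  have hnext : infDist (x (i + 1)) (range l) ≤ 2 * R := by
    linarith [infDist_le_infDist_add_dist (x := x (i + 1)) (y := x i) (s := range l),
      dist_comm (x i) (x (i + 1))]
  calc dist (x i) (x (i + n + 1))
      ≤ dist (x i) (x (i + 1)) + dist (x (i + 1)) (x (i + n + 1)) := dist_triangle _ _ _
    _ ≤ R + (2 * R + n * D + R) :=
      add_le_add hfirst ((hπ.dist_le_dist_proj hl _ _).trans (by linarith))
    _ ≤ 4 * R + ((i + n + 1 : ℕ) - i : ℝ) * D := by push_cast; linarith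

theorem exists_near_index_of_coarse_path (hSC : StronglyContracting l π D) (hl : Isometry l)
    (hπ : IsNearestPointProj l π) (hD : 0 ≤ D) {x : ℕ → X} {N : ℕ} {R c C : ℝ} (hR : 0 ≤ R)
    (hcD : D ≤ c) (hstep : ∀ m < N, dist (x m) (x (m + 1)) ≤ R)
    (hlower : ∀ i j, i ≤ j → j ≤ N → c * (j - i) - C ≤ dist (x i) (x j))
    (h0 : infDist (x 0) (range l) ≤ R) (hN : infDist (x N) (range l) ≤ R) {k : ℕ} (hk : k ≤ N) :
    ∃ i ≤ k, infDist (x i) (range l) ≤ R ∧ (c - D) * (k - i) ≤ 4 * R + C := by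
  obtain ⟨i, j, hik, hkj, hjN, hi, hj, hfar⟩ :=
    exists_nearest_le_and_ge (P := fun m => infDist (x m) (range l) ≤ R) h0 hN hk
  refine ⟨i, hik, hi, ?_⟩
  have hupper := hSC.dist_le_of_excursion hl hπ hD hR (hik.trans hkj)
    (fun m _ hm => hstep m (by omega)) hi hj (fun m him hmj => not_le.1 (hfar m him hmj))
  have hkj' : (k : ℝ) - i ≤ j - i := by gcongr
  nlinarith [hlower i j (hik.trans hkj) hjN, mul_le_mul_of_nonneg_left hkj' (sub_nonneg.2 hcD)]

theorem isMorseLine (hSC : StronglyContracting l π D) (hl : Isometry l)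
    (hπ : IsNearestPointProj l π) (hD : 0 ≤ D) : IsMorseLine l (contractingMorseGauge D) := by
  intro q Q hq hQ a b β hβ ha hb t ht
  have hab : a ≤ b := ht.1.trans ht.2
  set h := q * (D + 1) with hh_def
  set R := q * h + Q
  have hq0 : 0 < q := by linarith
  have hh : 0 < h := mul_pos hq0 (by linarith)
  have hR : 0 ≤ R := add_nonneg (mul_nonneg hq0.le hh.le) hQ
  set v := clampedGrid a b h
  have hv := clampedGrid_mem_Icc hab hh.le
  have hstep (m : ℕ) : dist (β (v m)) (β (v (m + 1))) ≤ R :=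
    (hβ _ (hv m) _ (hv _)).2.trans <|
      add_le_add_left (mul_le_mul_of_nonneg_left (abs_clampedGrid_sub_succ_le hh.le m) hq0.le) Q
  have hlower (i j : ℕ) (_ : i ≤ j) (hj : j ≤ ⌈(b - a) / h⌉₊) :
      (D + 1) * (j - i) - (D + 1 + Q) ≤ dist (β (v i)) (β (v j)) := by
    have hg := sub_le_clampedGrid_sub (i := i) hab hh hj
    calc (D + 1) * (j - i) - (D + 1 + Q) = 1 / q * ((j - i - 1) * h) - Q := by
          rw [hh_def]; field_simp; ring
      _ ≤ 1 / q * |v i - v j| - Q := by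
          gcongr
          exact hg.trans ((le_abs_self _).trans (abs_sub_comm _ _).le)
      _ ≤ dist (β (v i)) (β (v j)) := (hβ _ (hv i) _ (hv j)).1
  obtain ⟨k, hkN, hvk, htk⟩ := exists_clampedGrid_le_le_add ht hh
  obtain ⟨i, hik, hi, hki⟩ := hSC.exists_near_index_of_coarse_path hl hπ hD
    (x := fun m => β (v m)) hR (by linarith) (fun m _ => hstep m) hlower
    (by simp only [v, clampedGrid_zero hab, infDist_zero_of_mem ha, hR])
    (by simp only [v, clampedGrid_ceil hh, infDist_zero_of_mem hb, hR]) hkN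
  have hvi : v i ≤ t := (clampedGrid_mono hh.le hik).trans hvk
  have hti : t - v i ≤ h * (4 * R + D + Q + 2) := by
    have := clampedGrid_le_add (a := a) (b := b) hh.le hik
    nlinarith
  calc infDist (β t) (range l) ≤ infDist (β (v i)) (range l) + dist (β t) (β (v i)) :=
        infDist_le_infDist_add_dist
    _ ≤ R + (q * |t - v i| + Q) := add_le_add hi (hβ t ht _ (hv i)).2
    _ ≤ R + (q * (h * (4 * R + D + Q + 2)) + Q) := by
        rw [abs_of_nonneg (sub_nonneg.2 hvi)]; gcongr
    _ = contractingMorseGauge D q Q := by simp only [contractingMorseGauge]; ring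

end StronglyContracting

/-- In a geodesic metric space, every `D`-strongly contracting geodesic line is `M`-Morse
for a Morse gauge `M` depending only on `D`. -/
theorem strongly_contracting_implies_morse (D : ℝ) (hD : 0 ≤ D) :
    ∃ M : ℝ → ℝ → ℝ, (∀ q Q : ℝ, 1 ≤ q → 0 ≤ Q → 0 ≤ M q Q) ∧
      ∀ (X : Type w) [MetricSpace X], IsGeodesicSpace X →
        ∀ l : ℝ → X, Isometry l →
          ∀ π : X → ℝ, IsNearestPointProj l π →
            StronglyContracting l π D → IsMorseLine l M :=
  ⟨contractingMorseGauge D, fun _ _ hq hQ => contractingMorseGauge_nonneg hD hq hQ,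
    fun _ _ _ _ hl _ hπ hSC => hSC.isMorseLine hl hπ hD⟩
end
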